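/- Let Γ be a consistent extension of Δ⁰₁-comprehension that proves the existence of a universal Σ⁰₁ formula. Let P and Q be Π¹₂-problems and Λ(X,n,e) an arithmetic formula such that Player 2 wins any run of Ĝ^Γ(Q → P) that it plays according to Λ. Then there is an n such that Player 2 wins any run of G^Γ(Q → P) that it plays according to Λ in at most n many moves. -/

import Mathlib

/-!
A deep embedding of second-order arithmetic (with Henkin/two-sorted first-order semantics),
Π¹₂-problems, and the reduction games of Hirschfeldt–Jockusch type.

Provability `Proves Γ φ` is rendered as semantic consequence over all (Henkin) models;
by the Gödel completeness theorem for (two-sorted) first-order logic this coincides with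
derivability from `Γ`.
-/

namespace SOA

/-- An `L₁`-structure (a structure in the language of first-order arithmetic). -/
structure L1Struc where
  carrier : Type
  zero : carrier
  one : carrier
  add : carrier → carrier → carrier
  mul : carrier → carrier → carrier
  lt : carrier → carrier → Prop

/-- The standard natural numbers as an `L₁`-structure. -/
abbrev stdM : L1Struc where
  carrier := ℕ
  zero := 0
  one := 1
  add := (· + ·)
  mul := (· * ·)
  lt := (· < ·)

/-- Number terms of `L₁`/`L₂`, with named variables. -/
inductive Term : Type where
  | var : ℕ → Term
  | zero : Term
  | one : Term
  | add : Term → Term → Term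
  | mul : Term → Term → Term

def Term.val (M : L1Struc) (v : ℕ → M.carrier) : Term → M.carrier
  | .var i => v i
  | .zero => M.zero
  | .one => M.one
  | .add t s => M.add (t.val M v) (s.val M v)
  | .mul t s => M.mul (t.val M v) (s.val M v)

def Term.fv : Term → Set ℕ
  | .var i => {i}
  | .zero => ∅
  | .one => ∅
  | .add t s => t.fv ∪ s.fv
  | .mul t s => t.fv ∪ s.fv

/-- Formulas of `L₂`; number variables and set variables are indexed by `ℕ`. -/
inductive Formula : Type where
  | eq : Term → Term → Formula
  | lt : Term → Term → Formula
  | mem : Term → ℕ → Formula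
  | not : Formula → Formula
  | and : Formula → Formula → Formula
  | or : Formula → Formula → Formula
  | imp : Formula → Formula → Formula
  | allN : ℕ → Formula → Formula
  | exN : ℕ → Formula → Formula
  | allS : ℕ → Formula → Formula
  | exS : ℕ → Formula → Formula

def Formula.iff (φ ψ : Formula) : Formula := (φ.imp ψ).and (ψ.imp φ)

/-- Tarskian satisfaction; set quantifiers range over the second-order domain `D`. -/
def Formula.Sat (M : L1Struc) (D : Set (Set M.carrier)) :
    (ℕ → M.carrier) → (ℕ → Set M.carrier) → Formula → Prop
  | v, _, .eq t s => t.val M v = s.val M v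
  | v, _, .lt t s => M.lt (t.val M v) (s.val M v)
  | v, V, .mem t X => t.val M v ∈ V X
  | v, V, .not φ => ¬ Formula.Sat M D v V φ
  | v, V, .and φ ψ => Formula.Sat M D v V φ ∧ Formula.Sat M D v V ψ
  | v, V, .or φ ψ => Formula.Sat M D v V φ ∨ Formula.Sat M D v V ψ
  | v, V, .imp φ ψ => Formula.Sat M D v V φ → Formula.Sat M D v V ψ
  | v, V, .allN x φ => ∀ a : M.carrier, Formula.Sat M D (Function.update v x a) V φ
  | v, V, .exN x φ => ∃ a : M.carrier, Formula.Sat M D (Function.update v x a) V φ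
  | v, V, .allS X φ => ∀ A ∈ D, Formula.Sat M D v (Function.update V X A) φ
  | v, V, .exS X φ => ∃ A ∈ D, Formula.Sat M D v (Function.update V X A) φ

/-- Free number variables. -/
def Formula.numFV : Formula → Set ℕ
  | .eq t s => t.fv ∪ s.fv
  | .lt t s => t.fv ∪ s.fv
  | .mem t _ => t.fv
  | .not φ => φ.numFV
  | .and φ ψ => φ.numFV ∪ ψ.numFV
  | .or φ ψ => φ.numFV ∪ ψ.numFV
  | .imp φ ψ => φ.numFV ∪ ψ.numFV
  | .allN x φ => φ.numFV \ {x}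
  | .exN x φ => φ.numFV \ {x}
  | .allS _ φ => φ.numFV
  | .exS _ φ => φ.numFV

/-- Free set variables. -/
def Formula.setFV : Formula → Set ℕ
  | .eq _ _ => ∅
  | .lt _ _ => ∅
  | .mem _ X => {X}
  | .not φ => φ.setFV
  | .and φ ψ => φ.setFV ∪ ψ.setFV
  | .or φ ψ => φ.setFV ∪ ψ.setFV
  | .imp φ ψ => φ.setFV ∪ ψ.setFV
  | .allN _ φ => φ.setFV
  | .exN _ φ => φ.setFV
  | .allS X φ => φ.setFV \ {X}
  | .exS X φ => φ.setFV \ {X}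

/-- Arithmetic formulas: no set quantifiers (set variables may occur free). -/
def Formula.IsArithmetic : Formula → Prop
  | .eq _ _ => True
  | .lt _ _ => True
  | .mem _ _ => True
  | .not φ => φ.IsArithmetic
  | .and φ ψ => φ.IsArithmetic ∧ ψ.IsArithmetic
  | .or φ ψ => φ.IsArithmetic ∧ ψ.IsArithmetic
  | .imp φ ψ => φ.IsArithmetic ∧ ψ.IsArithmetic
  | .allN _ φ => φ.IsArithmetic
  | .exN _ φ => φ.IsArithmetic
  | .allS _ _ => False
  | .exS _ _ => False

/-- Δ⁰₀ (bounded) formulas. -/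
inductive IsDelta0 : Formula → Prop
  | eq (t s : Term) : IsDelta0 (.eq t s)
  | lt (t s : Term) : IsDelta0 (.lt t s)
  | mem (t : Term) (X : ℕ) : IsDelta0 (.mem t X)
  | not {φ} : IsDelta0 φ → IsDelta0 (.not φ)
  | and {φ ψ} : IsDelta0 φ → IsDelta0 ψ → IsDelta0 (.and φ ψ)
  | or {φ ψ} : IsDelta0 φ → IsDelta0 ψ → IsDelta0 (.or φ ψ)
  | imp {φ ψ} : IsDelta0 φ → IsDelta0 ψ → IsDelta0 (.imp φ ψ)
  | ballLt {φ} (x : ℕ) (t : Term) : x ∉ t.fv → IsDelta0 φ →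
      IsDelta0 (.allN x (.imp (.lt (.var x) t) φ))
  | bexLt {φ} (x : ℕ) (t : Term) : x ∉ t.fv → IsDelta0 φ →
      IsDelta0 (.exN x (.and (.lt (.var x) t) φ))

/-- Σ⁰₁ formulas: existential number quantifiers over a Δ⁰₀ matrix. -/
inductive IsSigma01 : Formula → Prop
  | delta0 {φ} : IsDelta0 φ → IsSigma01 φ
  | exN {φ} (x : ℕ) : IsSigma01 φ → IsSigma01 (.exN x φ)

/-- Π⁰₁ formulas. -/
inductive IsPi01 : Formula → Prop
  | delta0 {φ} : IsDelta0 φ → IsPi01 φ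
  | allN {φ} (x : ℕ) : IsPi01 φ → IsPi01 (.allN x φ)

/-- Σ⁰₂ formulas. -/
inductive IsSigma02 : Formula → Prop
  | pi01 {φ} : IsPi01 φ → IsSigma02 φ
  | exN {φ} (x : ℕ) : IsSigma02 φ → IsSigma02 (.exN x φ)

/-- Π¹₁ formulas: universal set quantifiers over an arithmetic matrix. -/
inductive IsPi11 : Formula → Prop
  | arith {φ} : φ.IsArithmetic → IsPi11 φ
  | allS {φ} (X : ℕ) : IsPi11 φ → IsPi11 (.allS X φ)

/-- Quantifier-free `L₁`-formulas (no set variables, no quantifiers). -/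
inductive IsQFL1 : Formula → Prop
  | eq (t s : Term) : IsQFL1 (.eq t s)
  | lt (t s : Term) : IsQFL1 (.lt t s)
  | not {φ} : IsQFL1 φ → IsQFL1 (.not φ)
  | and {φ ψ} : IsQFL1 φ → IsQFL1 ψ → IsQFL1 (.and φ ψ)
  | or {φ ψ} : IsQFL1 φ → IsQFL1 ψ → IsQFL1 (.or φ ψ)
  | imp {φ ψ} : IsQFL1 φ → IsQFL1 ψ → IsQFL1 (.imp φ ψ)

/-- Existential `L₁`-formulas. -/
inductive IsExistentialL1 : Formula → Prop
  | qf {φ} : IsQFL1 φ → IsExistentialL1 φ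
  | exN {φ} (x : ℕ) : IsExistentialL1 φ → IsExistentialL1 (.exN x φ)

def Term.subst (x : ℕ) (t : Term) : Term → Term
  | .var i => if i = x then t else .var i
  | .zero => .zero
  | .one => .one
  | .add a b => .add (Term.subst x t a) (Term.subst x t b)
  | .mul a b => .mul (Term.subst x t a) (Term.subst x t b)

/-- Substitution of the term `t` for the number variable `x` (used only with terms all of
whose variables are `x` itself, where it is capture-free). -/
def Formula.substN (x : ℕ) (t : Term) : Formula → Formula
  | .eq a b => .eq (Term.subst x t a) (Term.subst x t b)
  | .lt a b => .lt (Term.subst x t a) (Term.subst x t b)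
  | .mem a X => .mem (Term.subst x t a) X
  | .not φ => .not (φ.substN x t)
  | .and φ ψ => .and (φ.substN x t) (ψ.substN x t)
  | .or φ ψ => .or (φ.substN x t) (ψ.substN x t)
  | .imp φ ψ => .imp (φ.substN x t) (ψ.substN x t)
  | .allN y φ => if y = x then .allN y φ else .allN y (φ.substN x t)
  | .exN y φ => if y = x then .exN y φ else .exN y (φ.substN x t)
  | .allS X φ => .allS X (φ.substN x t)
  | .exS X φ => .exS X (φ.substN x t)

/-- `(M,S)` is a model of the theory `Γ` (schemes are read with free variables as
universally quantified parameters). -/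
def Models2 (M : L1Struc) (S : Set (Set M.carrier)) (Γ : Set Formula) : Prop :=
  ∀ φ ∈ Γ, ∀ (v : ℕ → M.carrier) (V : ℕ → Set M.carrier), (∀ i, V i ∈ S) → φ.Sat M S v V

/-- `Γ ⊢ φ`, rendered as semantic consequence over all Henkin models (equivalently,
derivability, by the Gödel completeness theorem). -/
def Proves (Γ : Set Formula) (φ : Formula) : Prop :=
  ∀ (M : L1Struc) (S : Set (Set M.carrier)), Models2 M S Γ →
    ∀ (v : ℕ → M.carrier) (V : ℕ → Set M.carrier), (∀ i, V i ∈ S) → φ.Sat M S v V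

/-- `Γ` is consistent (has a model). -/
def SemConsistent (Γ : Set Formula) : Prop :=
  ∃ (M : L1Struc) (S : Set (Set M.carrier)), Models2 M S Γ

/-- The Δ⁰₁-comprehension scheme. -/
def Delta01CA : Set Formula :=
  { F | ∃ (φ₀ φ₁ : Formula) (x X : ℕ), IsSigma01 φ₀ ∧ IsSigma01 φ₁ ∧
      X ∉ φ₀.setFV ∧ X ∉ φ₁.setFV ∧
      F = .imp (.allN x (Formula.iff φ₀ (.not φ₁)))
            (.exS X (.allN x (Formula.iff (.mem (.var x) X) φ₀))) }

/-- The Σ⁰₁-induction scheme. -/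
def ISigma01 : Set Formula :=
  { F | ∃ (φ : Formula) (x : ℕ), IsSigma01 φ ∧
      F = .imp (.and (φ.substN x .zero) (.allN x (.imp φ (φ.substN x (.add (.var x) .one)))))
            (.allN x φ) }

def ax1 : Formula := .not (.eq (.add (.var 0) .one) .zero)
def ax2 : Formula := .imp (.eq (.add (.var 0) .one) (.add (.var 1) .one)) (.eq (.var 0) (.var 1))
def ax3 : Formula := .eq (.add (.var 0) .zero) (.var 0)
def ax4 : Formula := .eq (.add (.var 0) (.add (.var 1) .one)) (.add (.add (.var 0) (.var 1)) .one)
def ax5 : Formula := .eq (.mul (.var 0) .zero) .zero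
def ax6 : Formula := .eq (.mul (.var 0) (.add (.var 1) .one)) (.add (.mul (.var 0) (.var 1)) (.var 0))
def ax7 : Formula := .not (.lt (.var 0) .zero)
def ax8 : Formula :=
  Formula.iff (.lt (.var 0) (.add (.var 1) .one)) (.or (.lt (.var 0) (.var 1)) (.eq (.var 0) (.var 1)))

/-- The basic (PA⁻) axioms of `RCA₀`. -/
def BasicAx : Set Formula := {ax1, ax2, ax3, ax4, ax5, ax6, ax7, ax8}

/-- The theory `RCA₀`. -/
def RCA0 : Set Formula := BasicAx ∪ ISigma01 ∪ Delta01CA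

/-- The Σ⁰₂-bounding scheme `BΣ⁰₂`. -/
def BSigma02 : Set Formula :=
  { F | ∃ (φ : Formula) (n i k b : ℕ), IsSigma02 φ ∧
      n ∉ φ.numFV ∧ b ∉ φ.numFV ∧
      n ≠ i ∧ n ≠ k ∧ n ≠ b ∧ i ≠ k ∧ i ≠ b ∧ k ≠ b ∧
      F = .allN n (.imp (.allN i (.imp (.lt (.var i) (.var n)) (.exN k φ)))
            (.exN b (.allN i (.imp (.lt (.var i) (.var n))
              (.exN k (.and (.or (.lt (.var k) (.var b)) (.eq (.var k) (.var b))) φ)))))) }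

/-- The Π¹₁ sentences true in the standard model `(ℕ, 𝒫(ℕ))`. -/
def TruePi11 : Set Formula :=
  { φ | IsPi11 φ ∧ φ.numFV = ∅ ∧ φ.setFV = ∅ ∧
        φ.Sat stdM Set.univ (fun _ => stdM.zero) (fun _ => (∅ : Set stdM.carrier)) }

/-- `Γ` is an extension of Δ⁰₁-comprehension by Π¹₁ formulas. -/
def ExtByPi11 (Γ : Set Formula) : Prop :=
  Delta01CA ⊆ Γ ∧ ∀ φ ∈ Γ, φ ∈ Delta01CA ∨ IsPi11 φ

/-! ### Π¹₂-problems -/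

/-- A Π¹₂-problem, given by arithmetic formulas `Θ(X)` (set variable `0`) and
`Ψ(X,Y)` (set variables `0`, `1`). -/
structure Pi12Problem where
  theta : Formula
  psi : Formula

def Pi12Problem.WellFormed (P : Pi12Problem) : Prop :=
  P.theta.IsArithmetic ∧ P.psi.IsArithmetic ∧
  P.theta.numFV = ∅ ∧ P.psi.numFV = ∅ ∧
  P.theta.setFV ⊆ {0} ∧ P.psi.setFV ⊆ {0, 1}

/-- `X` is an `M`-instance of `P`. -/
def Pi12Problem.Inst (P : Pi12Problem) (M : L1Struc) (X : Set M.carrier) : Prop :=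
  P.theta.Sat M Set.univ (fun _ => M.zero) (fun _ => X)

/-- `Y` is a solution to the `M`-instance `X` of `P`. -/
def Pi12Problem.Sol (P : Pi12Problem) (M : L1Struc) (X Y : Set M.carrier) : Prop :=
  P.psi.Sat M Set.univ (fun _ => M.zero) (fun i => if i = 0 then X else Y)

/-- The sentence `∀X (Θ(X) → ∃Y Ψ(X,Y))`. -/
def Pi12Problem.toSentence (P : Pi12Problem) : Formula :=
  .allS 0 (.imp P.theta (.exS 1 P.psi))

/-! ### Δ⁰₁-definability, `M[X₀,…,Xₙ]`, consistency with a theory -/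

/-- `X` is Δ⁰₁-definable over `M` with number parameters and set parameters from `Ps`. -/
def Delta1Def (M : L1Struc) (Ps : Set (Set M.carrier)) (X : Set M.carrier) : Prop :=
  ∃ (φ₀ φ₁ : Formula) (x : ℕ) (v : ℕ → M.carrier) (V : ℕ → Set M.carrier),
    IsSigma01 φ₀ ∧ IsSigma01 φ₁ ∧
    (∀ i ∈ φ₀.setFV ∪ φ₁.setFV, V i ∈ Ps) ∧
    (∀ a, φ₀.Sat M Set.univ (Function.update v x a) V ↔
          ¬ φ₁.Sat M Set.univ (Function.update v x a) V) ∧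
    X = {a | φ₀.Sat M Set.univ (Function.update v x a) V}

/-- The second-order part of `M[X₀,…,Xₙ]` for `Ps = {X₀,…,Xₙ}`. -/
def Mcl (M : L1Struc) (Ps : Set (Set M.carrier)) : Set (Set M.carrier) :=
  { X | Delta1Def M Ps X }

def histL (M : L1Struc) (f : ℕ → Set M.carrier) (n : ℕ) : List (Set M.carrier) :=
  (List.range (n+1)).map f

/-- The structure `M[X₀,…,Xₙ]` determined by a history of Player 1 moves. -/
def Board (M : L1Struc) (hist : List (Set M.carrier)) : Set (Set M.carrier) :=
  Mcl M { X | X ∈ hist }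

/-- An `L₂`-structure `(M,S)` is consistent with `Γ`: it is contained in a model of `Γ`
with the same first-order part. -/
def ConsWith (M : L1Struc) (S : Set (Set M.carrier)) (Γ : Set Formula) : Prop :=
  ∃ T, S ⊆ T ∧ Models2 M T Γ

/-- `S` is closed under Δ⁰₁-comprehension (with parameters from `S`). -/
def D01Closed (M : L1Struc) (S : Set (Set M.carrier)) : Prop :=
  ∀ X, Delta1Def M S X → X ∈ S

/-- The join `X ⊕ Y` inside `M`. -/
def joinM (M : L1Struc) (X Y : Set M.carrier) : Set M.carrier :=
  { c | (∃ a ∈ X, c = M.add a a) ∨ (∃ a ∈ Y, c = M.add (M.add a a) M.one) }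

/-- `X₀ ⊕ X₁ ⊕ ⋯ ⊕ Xₙ` (associated to the left). -/
def joinList (M : L1Struc) : List (Set M.carrier) → Set M.carrier
  | [] => ∅
  | X :: rest => rest.foldl (joinM M) X

/-- Numerals in `M`. -/
def numM (M : L1Struc) : ℕ → M.carrier
  | 0 => M.zero
  | n+1 => M.add (numM M n) M.one

/-! ### Reduction games

A run is given by Player 1's moves `f 0, f 1, …` and Player 2's moves `g 0, g 1, …`,
where `g n` is Player 2's reply (a victory flag together with a set) to `f 0, …, f n`.
`C` is the side condition on Player 1's histories (consistency with `Γ` for `G^Γ`,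
membership in `S` for the modified game `Ĝ^Γ`, trivial for the game over `ω`). -/

/-- The run is still alive after Player 1's move at stage `n` (all moves so far legal,
Player 2 has not yet declared victory). -/
def Alive (P Q : Pi12Problem) (M : L1Struc) (C : List (Set M.carrier) → Prop)
    (f : ℕ → Set M.carrier) (g : ℕ → Prop × Set M.carrier) : ℕ → Prop
  | 0 => P.Inst M (f 0) ∧ C (histL M f 0)
  | n+1 => Alive P Q M C f g n ∧ ¬ (g n).1 ∧ (g n).2 ∈ Board M (histL M f n) ∧
      Q.Inst M ((g n).2) ∧ Q.Sol M ((g n).2) (f (n+1)) ∧ C (histL M f (n+1))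

/-- Player 2's move at stage `n` is a legal winning move. -/
def P2WinMove (P : Pi12Problem) (M : L1Struc) (f : ℕ → Set M.carrier)
    (g : ℕ → Prop × Set M.carrier) (n : ℕ) : Prop :=
  (g n).1 ∧ (g n).2 ∈ Board M (histL M f n) ∧ P.Sol M (f 0) ((g n).2)

/-- Player 2's move at stage `n` is a legal continuing move (an instance of `Q`). -/
def P2ContMove (Q : Pi12Problem) (M : L1Struc) (f : ℕ → Set M.carrier)
    (g : ℕ → Prop × Set M.carrier) (n : ℕ) : Prop :=
  ¬ (g n).1 ∧ (g n).2 ∈ Board M (histL M f n) ∧ Q.Inst M ((g n).2)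

/-- Player 2 wins the run `(f,g)`: its moves are always legal while the run is alive, and
the run does not go on forever. -/
def P2WinsRun (P Q : Pi12Problem) (M : L1Struc) (C : List (Set M.carrier) → Prop)
    (f : ℕ → Set M.carrier) (g : ℕ → Prop × Set M.carrier) : Prop :=
  (∀ n, Alive P Q M C f g n → (P2ContMove Q M f g n ∨ P2WinMove P M f g n)) ∧
  ¬ (∀ n, Alive P Q M C f g n)

/-- Player 2 wins the run `(f,g)` within at most `n₀` moves. -/
def P2WinsRunWithin (P Q : Pi12Problem) (M : L1Struc) (C : List (Set M.carrier) → Prop)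
    (f : ℕ → Set M.carrier) (g : ℕ → Prop × Set M.carrier) (n₀ : ℕ) : Prop :=
  (∀ n, Alive P Q M C f g n → (P2ContMove Q M f g n ∨ P2WinMove P M f g n)) ∧
  ¬ Alive P Q M C f g n₀

/-- Side condition for `G^Γ`: each `M[X₀,…,Xₙ]` must be consistent with `Γ`. -/
def CondG (Γ : Set Formula) (M : L1Struc) (hist : List (Set M.carrier)) : Prop :=
  ConsWith M (Board M hist) Γ

/-- Side condition for `Ĝ^Γ`: Player 1's moves must lie in `S`. -/
def CondS (M : L1Struc) (S : Set (Set M.carrier)) (hist : List (Set M.carrier)) : Prop :=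
  ∀ X ∈ hist, X ∈ S

/-- Player 2 has a winning strategy for `G^Γ(Q → P)`. -/
def P2HasWinG (Γ : Set Formula) (P Q : Pi12Problem) : Prop :=
  ∃ σ : (M : L1Struc) → List (Set M.carrier) → Prop × Set M.carrier,
    ∀ M : L1Struc, Countable M.carrier → ∀ f,
      P2WinsRun P Q M (CondG Γ M) f (fun n => σ M (histL M f n))

/-- Player 2 has a winning strategy for `G^Γ(Q → P)` ensuring victory within `n₀` moves. -/
def P2HasWinGWithin (Γ : Set Formula) (P Q : Pi12Problem) (n₀ : ℕ) : Prop :=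
  ∃ σ : (M : L1Struc) → List (Set M.carrier) → Prop × Set M.carrier,
    ∀ M : L1Struc, Countable M.carrier → ∀ f,
      P2WinsRunWithin P Q M (CondG Γ M) f (fun n => σ M (histL M f n)) n₀

/-- Player 2 has a winning strategy for the modified game `Ĝ^Γ(Q → P)`. -/
def P2HasWinHat (Γ : Set Formula) (P Q : Pi12Problem) : Prop :=
  ∃ σ : (M : L1Struc) → Set (Set M.carrier) → List (Set M.carrier) → Prop × Set M.carrier,
    ∀ (M : L1Struc) (S : Set (Set M.carrier)), Countable M.carrier →
      Models2 M S Γ → D01Closed M S → ∀ f,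
        P2WinsRun P Q M (CondS M S) f (fun n => σ M S (histL M f n))

/-- Player 2 has a winning strategy for `Ĝ^Γ(Q → P)` ensuring victory within `n₀` moves. -/
def P2HasWinHatWithin (Γ : Set Formula) (P Q : Pi12Problem) (n₀ : ℕ) : Prop :=
  ∃ σ : (M : L1Struc) → Set (Set M.carrier) → List (Set M.carrier) → Prop × Set M.carrier,
    ∀ (M : L1Struc) (S : Set (Set M.carrier)), Countable M.carrier →
      Models2 M S Γ → D01Closed M S → ∀ f,
        P2WinsRunWithin P Q M (CondS M S) f (fun n => σ M S (histL M f n)) n₀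

/-- A strategy for Player 1 in `G^Γ`. -/
structure P1StratG where
  M : L1Struc
  first : Set M.carrier
  next : List (Prop × Set M.carrier) → Set M.carrier

def P1StratG.play (τ : P1StratG) (g : ℕ → Prop × Set τ.M.carrier) : ℕ → Set τ.M.carrier
  | 0 => τ.first
  | n+1 => τ.next ((List.range (n+1)).map g)

/-- Player 1 wins the run `(f,g)`: the first move is legal, Player 2 never makes a legal
winning move, and Player 1 can always respond legally. -/
def P1WinsRun (P Q : Pi12Problem) (M : L1Struc) (C : List (Set M.carrier) → Prop)
    (f : ℕ → Set M.carrier) (g : ℕ → Prop × Set M.carrier) : Prop :=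
  Alive P Q M C f g 0 ∧
  ∀ n, Alive P Q M C f g n →
    (¬ P2WinMove P M f g n ∧ (P2ContMove Q M f g n → Alive P Q M C f g (n+1)))

/-- Player 1 has a winning strategy for `G^Γ(Q → P)`. -/
def P1HasWinG (Γ : Set Formula) (P Q : Pi12Problem) : Prop :=
  ∃ τ : P1StratG, Countable τ.M.carrier ∧
    ∀ g, P1WinsRun P Q τ.M (CondG Γ τ.M) (τ.play g) g

/-- A strategy for Player 1 in the modified game `Ĝ^Γ` (its first move includes a model `(M,S)`). -/
structure P1StratHat where
  M : L1Struc
  S : Set (Set M.carrier)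
  first : Set M.carrier
  next : List (Prop × Set M.carrier) → Set M.carrier

def P1StratHat.play (τ : P1StratHat) (g : ℕ → Prop × Set τ.M.carrier) : ℕ → Set τ.M.carrier
  | 0 => τ.first
  | n+1 => τ.next ((List.range (n+1)).map g)

/-- Player 1 has a winning strategy for `Ĝ^Γ(Q → P)`. -/
def P1HasWinHat (Γ : Set Formula) (P Q : Pi12Problem) : Prop :=
  ∃ τ : P1StratHat, Countable τ.M.carrier ∧ Models2 τ.M τ.S Γ ∧ D01Closed τ.M τ.S ∧
    ∀ g, P1WinsRun P Q τ.M (CondS τ.M τ.S) (τ.play g) g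

/-! ### Universal Σ⁰₁ formulas and the functionals `Φₑ` -/

/-- Cantor pairing, as a relation in `M`: `e = ⟨i,j⟩` iff `2e = (i+j)² + (i+j) + 2i`. -/
def cantorPairRel (M : L1Struc) (i j e : M.carrier) : Prop :=
  M.add e e = M.add (M.add (M.mul (M.add i j) (M.add i j)) (M.add i j)) (M.add i i)

/-- Satisfaction of `θ(i, n, X)` (number variables `0`, `1`; set variable `0`). -/
def satIdx (θ : Formula) (M : L1Struc) (i n : M.carrier) (X : Set M.carrier) : Prop :=
  θ.Sat M Set.univ (fun m => if m = 0 then i else if m = 1 then n else M.zero) (fun _ => X)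

/-- `Y = Φₑ^X` in `M`, relative to the universal Σ⁰₁ formula `θ`. -/
def IsPhi (θ : Formula) (M : L1Struc) (e : M.carrier) (X Y : Set M.carrier) : Prop :=
  ∃ i j : M.carrier, cantorPairRel M i j e ∧
    (∀ n, satIdx θ M i n X ↔ ¬ satIdx θ M j n X) ∧
    (∀ n, n ∈ Y ↔ satIdx θ M i n X)

def GoodSigma (φ : Formula) : Prop :=
  IsSigma01 φ ∧ φ.numFV ⊆ {0, 1} ∧ φ.setFV ⊆ {0}

/-- `θ` is a universal Σ⁰₁ formula, provably in `Γ`. -/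
def UnivSigma01 (Γ : Set Formula) (θ : Formula) : Prop :=
  GoodSigma θ ∧ ∀ φ, GoodSigma φ →
    ∀ (M : L1Struc) (S : Set (Set M.carrier)), Models2 M S Γ →
      ∀ e : M.carrier, ∃ i : M.carrier, ∀ n : M.carrier, ∀ X ∈ S,
        (satIdx θ M i n X ↔ satIdx φ M e n X)

/-- `θ` is a universal Σ⁰₁ formula over the standard model. -/
def UnivSigma01Std (θ : Formula) : Prop :=
  GoodSigma θ ∧ ∀ φ, GoodSigma φ →
    ∀ e : stdM.carrier, ∃ i : stdM.carrier, ∀ (n : stdM.carrier) (X : Set stdM.carrier),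
      (satIdx θ stdM i n X ↔ satIdx φ stdM e n X)

/-! ### Computable strategies for Player 2 -/

/-- The move prescribed by the computable strategy with index `k` at the given history:
Player 2 plays `Z = Φ_e^{X₀⊕⋯⊕Xₙ}` where `e = Φ_k(n)`; by the coding convention, `Z`
declares victory iff `0 ∈ Z`, with payload `{a : a+1 ∈ Z}`. -/
def CodeMove (θ : Formula) (M : L1Struc) (k : Nat.Partrec.Code)
    (hist : List (Set M.carrier)) (mv : Prop × Set M.carrier) : Prop :=
  ∃ e : ℕ, e ∈ k.eval (hist.length - 1) ∧
    ∃ Z : Set M.carrier, IsPhi θ M (numM M e) (joinList M hist) Z ∧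
      mv = ((M.zero ∈ Z), { a | M.add a M.one ∈ Z })

/-- The computable strategy `k` wins every run of the game over `M` with side condition `C`. -/
def P2CompWinsC (θ : Formula) (k : Nat.Partrec.Code) (P Q : Pi12Problem) (M : L1Struc)
    (C : List (Set M.carrier) → Prop) : Prop :=
  ∀ f g,
    ((∀ n, (∀ m < n, Alive P Q M C f g m → CodeMove θ M k (histL M f m) (g m)) →
        Alive P Q M C f g n → ∃ mv, CodeMove θ M k (histL M f n) mv) ∧
     ((∀ n, Alive P Q M C f g n → CodeMove θ M k (histL M f n) (g n)) →
        P2WinsRun P Q M C f g))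

def P2CompWinsCWithin (θ : Formula) (k : Nat.Partrec.Code) (P Q : Pi12Problem) (M : L1Struc)
    (C : List (Set M.carrier) → Prop) (n₀ : ℕ) : Prop :=
  ∀ f g,
    ((∀ n, (∀ m < n, Alive P Q M C f g m → CodeMove θ M k (histL M f m) (g m)) →
        Alive P Q M C f g n → ∃ mv, CodeMove θ M k (histL M f n) mv) ∧
     ((∀ n, Alive P Q M C f g n → CodeMove θ M k (histL M f n) (g n)) →
        P2WinsRunWithin P Q M C f g n₀))

/-- Player 2 has a computable winning strategy for `G^Γ(Q → P)`. -/
def P2CompWinsG (Γ : Set Formula) (θ : Formula) (P Q : Pi12Problem) : Prop :=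
  ∃ k : Nat.Partrec.Code, ∀ M : L1Struc, Countable M.carrier →
    P2CompWinsC θ k P Q M (CondG Γ M)

def P2CompWinsGWithin (Γ : Set Formula) (θ : Formula) (P Q : Pi12Problem) (n₀ : ℕ) : Prop :=
  ∃ k : Nat.Partrec.Code, ∀ M : L1Struc, Countable M.carrier →
    P2CompWinsCWithin θ k P Q M (CondG Γ M) n₀

/-- Player 2 has a computable winning strategy for `Ĝ^Γ(Q → P)`. -/
def P2CompWinsHat (Γ : Set Formula) (θ : Formula) (P Q : Pi12Problem) : Prop :=
  ∃ k : Nat.Partrec.Code, ∀ (M : L1Struc) (S : Set (Set M.carrier)), Countable M.carrier →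
    Models2 M S Γ → D01Closed M S → P2CompWinsC θ k P Q M (CondS M S)

def P2CompWinsHatWithin (Γ : Set Formula) (θ : Formula) (P Q : Pi12Problem) (n₀ : ℕ) : Prop :=
  ∃ k : Nat.Partrec.Code, ∀ (M : L1Struc) (S : Set (Set M.carrier)), Countable M.carrier →
    Models2 M S Γ → D01Closed M S → P2CompWinsCWithin θ k P Q M (CondS M S) n₀

/-- Player 2 has a computable winning strategy for the game `G(Q → P)` over the standard
natural numbers. -/
def P2CompWinsStd (θ : Formula) (P Q : Pi12Problem) : Prop :=
  ∃ k : Nat.Partrec.Code, P2CompWinsC θ k P Q stdM (fun _ => True)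

def P2CompWinsStdWithin (θ : Formula) (P Q : Pi12Problem) (n₀ : ℕ) : Prop :=
  ∃ k : Nat.Partrec.Code, P2CompWinsCWithin θ k P Q stdM (fun _ => True) n₀

/-- Player 2 has a winning strategy for the game `G(Q → P)` over the standard natural
numbers ensuring victory within `n₀` moves. -/
def P2HasWinStdWithin (P Q : Pi12Problem) (n₀ : ℕ) : Prop :=
  ∃ σ : List (Set stdM.carrier) → Prop × Set stdM.carrier,
    ∀ f, P2WinsRunWithin P Q stdM (fun _ => True) f (fun n => σ (histL stdM f n)) n₀

/-- `P ≤ω^n Q`: Player 2 wins `G(Q → P)` over `ω` in at most `n+1` moves. -/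
def leOmegaN (P Q : Pi12Problem) (n : ℕ) : Prop := P2HasWinStdWithin P Q (n+1)

/-- Weihrauch reducibility over `Γ` (relative to the universal Σ⁰₁ formula `θ`). -/
def WRed (Γ : Set Formula) (θ : Formula) (P Q : Pi12Problem) : Prop :=
  ∃ e i : ℕ, ∀ (M : L1Struc) (S : Set (Set M.carrier)),
    Countable M.carrier → Models2 M S Γ → D01Closed M S →
    ∀ X ∈ S, P.Inst M X →
      ∃ Xh : Set M.carrier, IsPhi θ M (numM M e) X Xh ∧ Q.Inst M Xh ∧
        ∀ Yh ∈ S, Q.Sol M Xh Yh →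
          ∃ Ys : Set M.carrier, IsPhi θ M (numM M i) (joinM M X Yh) Ys ∧ P.Sol M X Ys

/-! ### Runs played according to an arithmetic formula `Λ(X,n,e)` -/

/-- The run `(f,g)` is played by Player 2 according to `Λ`: at each alive stage `n`, Player 2
plays (the coded move of) `Φ_e^{X₀⊕⋯⊕Xₙ}` for some `e ∈ M` with
`M[X₀,…,Xₙ] ⊨ Λ(X₀⊕⋯⊕Xₙ, n, e)`. -/
def AccordsLambda (θ Λ : Formula) (P Q : Pi12Problem) (M : L1Struc)
    (C : List (Set M.carrier) → Prop) (f : ℕ → Set M.carrier)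
    (g : ℕ → Prop × Set M.carrier) : Prop :=
  ∀ n, Alive P Q M C f g n → ∃ (e : M.carrier) (Z : Set M.carrier),
    Λ.Sat M Set.univ (fun m => if m = 0 then numM M n else if m = 1 then e else M.zero)
      (fun _ => joinList M (histL M f n)) ∧
    IsPhi θ M e (joinList M (histL M f n)) Z ∧
    g n = ((M.zero ∈ Z), { a | M.add a M.one ∈ Z })

/-! ### Semantic rendering of the formulas `Θₙ` and `Δₙ` -/

/-- Satisfaction of the matrix `Θₙ`, given `X₀`, the current join `J`, the pairs
`(e_j, Y_j)` and the remaining `X_{j+1}, …`. -/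
def ThetaSat (θ : Formula) (P Q : Pi12Problem) (M : L1Struc) (X0 : Set M.carrier) :
    Set M.carrier → List (M.carrier × Set M.carrier) → List (Set M.carrier) → Prop
  | _, [], _ => True
  | J, [(e, Y)], _ => IsPhi θ M e J Y ∧ P.Sol M X0 Y
  | _, _ :: _ :: _, [] => True
  | J, (e, Y) :: eY' :: eYs, X :: Xs =>
      IsPhi θ M e J Y ∧ (P.Sol M X0 Y ∨ (Q.Inst M Y ∧ (Q.Sol M Y X →
        ThetaSat θ P Q M X0 (joinM M J X) (eY' :: eYs) Xs)))

def DeltaSatFin (θ : Formula) (P Q : Pi12Problem) (M : L1Struc)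
    (Xs : List (Set M.carrier)) (eYs : List (M.carrier × Set M.carrier)) : Prop :=
  match Xs with
  | [] => True
  | X0 :: rest => P.Inst M X0 → ThetaSat θ P Q M X0 X0 eYs rest

def DeltaSatAux (θ : Formula) (P Q : Pi12Problem) (M : L1Struc) (S : Set (Set M.carrier)) :
    ℕ → List (Set M.carrier) → List (M.carrier × Set M.carrier) → Prop
  | 0, Xs, eYs => DeltaSatFin θ P Q M Xs eYs
  | k+1, Xs, eYs => ∀ X ∈ S, ∃ e : M.carrier, ∃ Y ∈ S,
      DeltaSatAux θ P Q M S k (Xs ++ [X]) (eYs ++ [(e, Y)])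

/-- `(M,S) ⊨ Δₙ`, i.e. `∀X₀ ∃e₀,Y₀ ⋯ ∀Xₙ ∃eₙ,Yₙ Θₙ(…)`. -/
def DeltaSat (θ : Formula) (P Q : Pi12Problem) (M : L1Struc) (S : Set (Set M.carrier))
    (n : ℕ) : Prop :=
  DeltaSatAux θ P Q M S (n+1) [] []

/-! ### Concrete Π¹₂-problems -/

/-- The pairing term `π(t,s) = (t+s)·(t+s) + t`. -/
def pairT (t s : Term) : Term := .add (.mul (.add t s) (.add t s)) t

def Term.ofNat : ℕ → Term
  | 0 => .zero
  | n+1 => .add (Term.ofNat n) .one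

def trueF : Formula := .eq .zero .zero

def leF (t s : Term) : Formula := .or (.lt t s) (.eq t s)

/-- "The set variable `s` names an infinite set" (using number variables `a`, `b`). -/
def infiniteF (s a b : ℕ) : Formula :=
  .allN a (.exN b (.and (.lt (.var a) (.var b)) (.mem (.var b) s)))

/-- `LH`: instances are `c : [ℕ]² → 2` with `lim_y c(x,y) = 1` for all `x`
(coded as the set of codes `π(x,y)`, `x<y`, of pairs colored `1`); solutions are
infinite homogeneous sets. -/
def LH : Pi12Problem where
  theta := .allN 0 (.exN 1 (.allN 2 (.imp (.and (.lt (.var 0) (.var 2)) (.lt (.var 1) (.var 2)))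
    (.mem (pairT (.var 0) (.var 2)) 0))))
  psi := .and (infiniteF 1 0 1)
    (.or
      (.allN 0 (.allN 1 (.imp
        (.and (.mem (.var 0) 1) (.and (.mem (.var 1) 1) (.lt (.var 0) (.var 1))))
        (.mem (pairT (.var 0) (.var 1)) 0))))
      (.allN 0 (.allN 1 (.imp
        (.and (.mem (.var 0) 1) (.and (.mem (.var 1) 1) (.lt (.var 0) (.var 1))))
        (.not (.mem (pairT (.var 0) (.var 1)) 0))))))

/-- `Bound*`: an instance is a simultaneous enumeration of a finite family `F₀,…,F_k` of
bounded sets (marker `π(0,k)`; entries `π(i+1, π(n,s))` meaning `n` enters `F_i` at stage `s`);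
a solution is (the singleton of) a common bound. -/
def BoundStar : Pi12Problem where
  theta := .exN 0 (.and (.mem (pairT .zero (.var 0)) 0)
    (.and (.allN 1 (.imp (.mem (pairT .zero (.var 1)) 0) (.eq (.var 1) (.var 0))))
      (.and (.allN 1 (.imp (.mem (.var 1) 0)
          (.or (.exN 2 (.eq (.var 1) (pairT .zero (.var 2))))
               (.exN 2 (.and (leF (.var 2) (.var 0))
                 (.exN 3 (.exN 4 (.eq (.var 1)
                   (pairT (.add (.var 2) .one) (pairT (.var 3) (.var 4)))))))))))
        (.allN 1 (.imp (leF (.var 1) (.var 0))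
          (.exN 2 (.allN 3 (.allN 4 (.imp
            (.mem (pairT (.add (.var 1) .one) (pairT (.var 3) (.var 4))) 0)
            (leF (.var 3) (.var 2)))))))))))
  psi := .exN 0 (.and (.mem (.var 0) 1)
    (.and (.allN 1 (.imp (.mem (.var 1) 1) (.eq (.var 1) (.var 0))))
      (.allN 1 (.allN 2 (.allN 3 (.imp
        (.mem (pairT (.add (.var 1) .one) (pairT (.var 2) (.var 3))) 0)
        (leF (.var 2) (.var 0))))))))

/-- `stBound*`: an instance is an enumeration of a set `X ⊆ ℕ×ℕ` (entries `π(π(n,k),s)`)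
such that `{n : ∃k (n,k) ∈ X}` is bounded and each `{k : (n,k) ∈ X}` is bounded; a solution
is (the singleton of) a bound on `{k : ∃n (n,k) ∈ X}`. -/
def stBoundStar : Pi12Problem where
  theta := .and (.allN 0 (.imp (.mem (.var 0) 0)
        (.exN 1 (.exN 2 (.exN 3 (.eq (.var 0) (pairT (pairT (.var 1) (.var 2)) (.var 3))))))))
    (.and (.exN 0 (.allN 1 (.allN 2 (.allN 3 (.imp
        (.mem (pairT (pairT (.var 1) (.var 2)) (.var 3)) 0) (leF (.var 1) (.var 0)))))))
      (.allN 1 (.exN 0 (.allN 2 (.allN 3 (.imp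
        (.mem (pairT (pairT (.var 1) (.var 2)) (.var 3)) 0) (leF (.var 2) (.var 0))))))))
  psi := .exN 0 (.and (.mem (.var 0) 1)
    (.and (.allN 1 (.imp (.mem (.var 1) 1) (.eq (.var 1) (.var 0))))
      (.allN 1 (.allN 2 (.allN 3 (.imp
        (.mem (pairT (pairT (.var 1) (.var 2)) (.var 3)) 0)
        (leF (.var 2) (.var 0))))))))

/-- `stRT¹_{<∞}`: instances are functions `c : ℕ → ℕ` with bounded range (coded as sets of
codes `π(x, c(x))`); solutions are infinite sets on which `c` is constant. -/
def stRT1inf : Pi12Problem where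
  theta := .and (.allN 0 (.exN 1 (.and (.mem (pairT (.var 0) (.var 1)) 0)
        (.allN 2 (.imp (.mem (pairT (.var 0) (.var 2)) 0) (.eq (.var 2) (.var 1)))))))
    (.exN 1 (.allN 0 (.allN 2 (.imp (.mem (pairT (.var 0) (.var 2)) 0) (leF (.var 2) (.var 1))))))
  psi := .and (infiniteF 1 0 1)
    (.exN 0 (.allN 1 (.imp (.mem (.var 1) 1) (.mem (pairT (.var 1) (.var 0)) 0))))

/-- `C_ℕ`: an instance is an enumeration of the complement of a nonempty set `A`
(entries `π(n,s)` meaning `n` is enumerated out at stage `s`); a solution is (the singleton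
of) an element of `A`. -/
def CN : Pi12Problem where
  theta := .exN 0 (.allN 1 (.not (.mem (pairT (.var 0) (.var 1)) 0)))
  psi := .exN 0 (.and (.mem (.var 0) 1)
    (.and (.allN 1 (.imp (.mem (.var 1) 1) (.eq (.var 1) (.var 0))))
      (.allN 1 (.not (.mem (pairT (.var 0) (.var 1)) 0)))))

/-- The code `π(x_i, π(x_{i+1}, …, x_{i+c-1}))` of the tuple of variables `i, …, i+c-1`. -/
def varsCode : ℕ → ℕ → Term
  | _, 0 => .zero
  | i, 1 => .var i
  | i, c+2 => pairT (.var i) (varsCode (i+1) (c+1))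

/-- `x_i < x_{i+1} < ⋯ < x_{i+c-1}`. -/
def chainLt : ℕ → ℕ → Formula
  | _, 0 => trueF
  | _, 1 => trueF
  | i, c+2 => .and (.lt (.var i) (.var (i+1))) (chainLt (i+1) (c+1))

/-- `x_i ∈ s ∧ ⋯ ∧ x_{i+c-1} ∈ s` (for the set variable `s`). -/
def allMemS (s : ℕ) : ℕ → ℕ → Formula
  | _, 0 => trueF
  | i, c+1 => .and (.mem (.var i) s) (allMemS s (i+1) c)

/-- `∀ x_i ⋯ ∀ x_{i+c-1} φ`. -/
def allNs : ℕ → ℕ → Formula → Formula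
  | _, 0, φ => φ
  | i, c+1, φ => .allN i (allNs (i+1) c φ)

/-- `RTⁿ_k`: instances are colorings `c : [ℕ]ⁿ → k` (coded as sets of codes
`π(⟨x₁,…,xₙ⟩, v)` for `x₁<⋯<xₙ` and `v = c(x₁,…,xₙ) < k`); solutions are infinite
homogeneous sets. -/
def RTn (n k : ℕ) : Pi12Problem where
  theta := allNs 1 n (.imp (chainLt 1 n)
    (.exN 0 (.and (.lt (.var 0) (Term.ofNat k))
      (.and (.mem (pairT (varsCode 1 n) (.var 0)) 0)
        (.allN (n+1) (.imp (.mem (pairT (varsCode 1 n) (.var (n+1))) 0)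
          (.eq (.var (n+1)) (.var 0))))))))
  psi := .and (infiniteF 1 (n+1) (n+2))
    (.exN 0 (.and (.lt (.var 0) (Term.ofNat k))
      (allNs 1 n (.imp (.and (chainLt 1 n) (allMemS 1 1 n))
        (.mem (pairT (varsCode 1 n) (.var 0)) 0)))))

/-- `RTⁿ_{<∞}`: the number of colors is part of the instance (marker `π(0,k)`, entries
`π(1, π(⟨x₁,…,xₙ⟩, v))`). -/
def RTnInf (n : ℕ) : Pi12Problem where
  theta := .exN 0 (.and (.mem (pairT .zero (.var 0)) 0)
    (.and (.allN (n+1) (.imp (.mem (pairT .zero (.var (n+1))) 0) (.eq (.var (n+1)) (.var 0))))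
      (allNs 1 n (.imp (chainLt 1 n)
        (.exN (n+1) (.and (.lt (.var (n+1)) (.var 0))
          (.and (.mem (pairT .one (pairT (varsCode 1 n) (.var (n+1)))) 0)
            (.allN (n+2) (.imp (.mem (pairT .one (pairT (varsCode 1 n) (.var (n+2)))) 0)
              (.eq (.var (n+2)) (.var (n+1))))))))))))
  psi := .and (infiniteF 1 (n+1) (n+2))
    (.exN (n+1) (allNs 1 n (.imp (.and (chainLt 1 n) (allMemS 1 1 n))
      (.mem (pairT .one (pairT (varsCode 1 n) (.var (n+1)))) 0))))

/-! ### Material for Uftring's example (Statement 11) -/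

/-- `G` is (an arithmetization of) a primitive recursive predicate: a Σ⁰₁ formula in the
number variable `0`, `RCA₀`-provably equivalent to a Π⁰₁ formula, whose standard
extension is primitive recursive. -/
def PrimRecPred (G : Formula) : Prop :=
  IsSigma01 G ∧ G.numFV ⊆ {0} ∧ G.setFV = ∅ ∧
  (∃ π : Formula, IsPi01 π ∧ π.numFV ⊆ {0} ∧ π.setFV = ∅ ∧
      Proves RCA0 (Formula.iff G π)) ∧
  (∃ f : ℕ → Bool, Nat.Primrec (fun m => (f m).toNat) ∧
      ∀ m : ℕ, f m = true ↔
        G.Sat stdM Set.univ (fun i => if i = 0 then m else 0) (fun _ => (∅ : Set ℕ)))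

/-- Truth of `G(m)` in the standard model. -/
def satStd1 (G : Formula) (m : ℕ) : Prop :=
  G.Sat stdM Set.univ (fun i => if i = 0 then m else 0) (fun _ => (∅ : Set ℕ))

/-- The problem `P ≡ ∀X ∃Y ∀x G(x)`. -/
def PGprob (G : Formula) : Pi12Problem where
  theta := trueF
  psi := .allN 0 G

/-- The problem `Q ≡ ∀X [X ≠ ∅ → ∃Y G(μX)]`. -/
def QGprob (G : Formula) : Pi12Problem where
  theta := .exN 0 (.mem (.var 0) 0)
  psi := .exN 0 (.and (.mem (.var 0) 0)
    (.and (.allN 1 (.imp (.lt (.var 1) (.var 0)) (.not (.mem (.var 1) 0)))) G))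

/-! ### Material for Statement 13 -/

/-- A model of a sentence (all valuations into `S`). -/
def ModelsSent (M : L1Struc) (S : Set (Set M.carrier)) (φ : Formula) : Prop :=
  ∀ (v : ℕ → M.carrier) (V : ℕ → Set M.carrier), (∀ i, V i ∈ S) → φ.Sat M S v V

/-- The pairing function inside `M`. -/
def pairM (M : L1Struc) (x y : M.carrier) : M.carrier :=
  M.add (M.mul (M.add x y) (M.add x y)) x

/-- `j : ℕ → M` is an embedding of the standard model into `M`. -/
def L1Embed (M : L1Struc) (j : ℕ → M.carrier) : Prop :=
  j 0 = M.zero ∧ j 1 = M.one ∧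
  (∀ a b : ℕ, j (a + b) = M.add (j a) (j b)) ∧
  (∀ a b : ℕ, j (a * b) = M.mul (j a) (j b)) ∧
  (∀ a b : ℕ, a < b ↔ M.lt (j a) (j b)) ∧
  Function.Injective j

/-- `M` and the embedded standard model satisfy the same existential `L₁`-sentences with
parameters from `ℕ`. -/
def OneElementaryOverStd (M : L1Struc) (j : ℕ → M.carrier) : Prop :=
  ∀ φ, IsExistentialL1 φ → ∀ v : ℕ → ℕ,
    (φ.Sat stdM Set.univ v (fun _ => (∅ : Set ℕ)) ↔
     φ.Sat M Set.univ (fun i => j (v i)) (fun _ => (∅ : Set M.carrier)))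

/-- `A` is `M`-finite: Δ⁰₁-definable over `M` (without set parameters) and bounded. -/
def MFinite (M : L1Struc) (A : Set M.carrier) : Prop :=
  A ∈ Mcl M (∅ : Set (Set M.carrier)) ∧ ∃ b, ∀ x ∈ A, M.lt x b

/-- A total coloring (coded as the set `X` of codes of pairs colored `1`) extends the
condition `(m, p)` of the forcing notion `P_M`: it agrees with `p` below `m`, and colors
`(x,y)` with `1` whenever `x < m ≤ y`. -/
def ExtendsCond (M : L1Struc) (m : M.carrier) (p : Set M.carrier) (X : Set M.carrier) : Prop :=
  (∀ x y, M.lt x y → M.lt y m → (pairM M x y ∈ X ↔ pairM M x y ∈ p)) ∧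
  (∀ x y, M.lt x m → ¬ M.lt y m → M.lt x y → pairM M x y ∈ X)

end SOA

/-!
If no bound existed, then for every `n` some `Λ`-accordant run of `G^Γ(Q → P)` over a countable
`Mₙ` would still be undecided after `n` moves; Player 2's moves in it are legal, because an illegal
move would also be one in `Ĝ^Γ(Q → P)` over a model of `Γ` containing the current board. By Łoś's
theorem, the ultraproduct of these runs along a nonprincipal ultrafilter on `ℕ` is an endless
`Λ`-accordant run over the ultraproduct of those models of `Γ`. A countable Skolem hull of it is a
countable model of `Γ`, closed under Δ⁰₁-comprehension, carrying an endless `Λ`-accordant run of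
`Ĝ^Γ(Q → P)`, which contradicts the hypothesis.
-/

namespace SOA

instance (M : L1Struc) : Nonempty M.carrier := ⟨M.zero⟩

theorem Term.val_congr {M : L1Struc} {v v' : ℕ → M.carrier} :
    ∀ t : Term, Set.EqOn v v' t.fv → t.val M v = t.val M v'
  | .var _, h => h rfl
  | .zero, _ => rfl
  | .one, _ => rfl
  | .add t s, h => congrArg₂ M.add (t.val_congr (h.mono fun _ => .inl))
      (s.val_congr (h.mono fun _ => .inr))
  | .mul t s, h => congrArg₂ M.mul (t.val_congr (h.mono fun _ => .inl))
      (s.val_congr (h.mono fun _ => .inr))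

theorem eqOn_update {α : Type*} {v v' : ℕ → α} {s : Set ℕ} {x : ℕ}
    (h : Set.EqOn v v' (s \ {x})) (a : α) :
    Set.EqOn (Function.update v x a) (Function.update v' x a) s := by
  intro i hi
  rcases eq_or_ne i x with rfl | hix
  · simp
  · simpa [Function.update_of_ne hix] using h ⟨hi, hix⟩

theorem Formula.sat_congr {M : L1Struc} {D : Set (Set M.carrier)} :
    ∀ (φ : Formula) {v v' : ℕ → M.carrier} {V V' : ℕ → Set M.carrier},
      Set.EqOn v v' φ.numFV → Set.EqOn V V' φ.setFV →
      (φ.Sat M D v V ↔ φ.Sat M D v' V')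
  | .eq t s, _, _, _, _, hv, _ => by
      simp only [Formula.Sat, t.val_congr (hv.mono fun _ => .inl),
        s.val_congr (hv.mono fun _ => .inr)]
  | .lt t s, _, _, _, _, hv, _ => by
      simp only [Formula.Sat, t.val_congr (hv.mono fun _ => .inl),
        s.val_congr (hv.mono fun _ => .inr)]
  | .mem t X, _, _, _, _, hv, hV => by
      simp only [Formula.Sat, t.val_congr hv, hV (Set.mem_singleton X)]
  | .not φ, _, _, _, _, hv, hV => not_congr (φ.sat_congr hv hV)
  | .and φ ψ, _, _, _, _, hv, hV =>
      and_congr (φ.sat_congr (hv.mono fun _ => .inl) (hV.mono fun _ => .inl))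
        (ψ.sat_congr (hv.mono fun _ => .inr) (hV.mono fun _ => .inr))
  | .or φ ψ, _, _, _, _, hv, hV =>
      or_congr (φ.sat_congr (hv.mono fun _ => .inl) (hV.mono fun _ => .inl))
        (ψ.sat_congr (hv.mono fun _ => .inr) (hV.mono fun _ => .inr))
  | .imp φ ψ, _, _, _, _, hv, hV =>
      imp_congr (φ.sat_congr (hv.mono fun _ => .inl) (hV.mono fun _ => .inl))
        (ψ.sat_congr (hv.mono fun _ => .inr) (hV.mono fun _ => .inr))
  | .allN _ φ, _, _, _, _, hv, hV => forall_congr' fun a => φ.sat_congr (eqOn_update hv a) hV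
  | .exN _ φ, _, _, _, _, hv, hV => exists_congr fun a => φ.sat_congr (eqOn_update hv a) hV
  | .allS _ φ, _, _, _, _, hv, hV =>
      forall₂_congr fun A _ => φ.sat_congr hv (eqOn_update hV A)
  | .exS _ φ, _, _, _, _, hv, hV =>
      exists_congr fun A => and_congr_right fun _ => φ.sat_congr hv (eqOn_update hV A)

theorem Formula.IsArithmetic.sat_iff {M : L1Struc} {D D' : Set (Set M.carrier)} :
    ∀ {φ : Formula}, φ.IsArithmetic → ∀ {v : ℕ → M.carrier} {V : ℕ → Set M.carrier},
      (φ.Sat M D v V ↔ φ.Sat M D' v V)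
  | .eq _ _, _, _, _ => Iff.rfl
  | .lt _ _, _, _, _ => Iff.rfl
  | .mem _ _, _, _, _ => Iff.rfl
  | .not φ, h, _, _ => not_congr (sat_iff (φ := φ) h)
  | .and _ _, h, _, _ => and_congr h.1.sat_iff h.2.sat_iff
  | .or _ _, h, _, _ => or_congr h.1.sat_iff h.2.sat_iff
  | .imp _ _, h, _, _ => imp_congr h.1.sat_iff h.2.sat_iff
  | .allN _ φ, h, _, _ => forall_congr' fun _ => sat_iff (φ := φ) h
  | .exN _ φ, h, _, _ => exists_congr fun _ => sat_iff (φ := φ) h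

theorem Formula.sat_allN_iff {M : L1Struc} {D : Set (Set M.carrier)} {v : ℕ → M.carrier}
    {V : ℕ → Set M.carrier} {x : ℕ} {φ : Formula} :
    (Formula.allN x φ).Sat M D v V ↔ ¬ (Formula.exN x φ.not).Sat M D v V := by
  simp [Formula.Sat]

theorem Formula.sat_allS_iff {M : L1Struc} {D : Set (Set M.carrier)} {v : ℕ → M.carrier}
    {V : ℕ → Set M.carrier} {X : ℕ} {φ : Formula} :
    (Formula.allS X φ).Sat M D v V ↔ ¬ (Formula.exS X φ.not).Sat M D v V := by
  simp [Formula.Sat]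

theorem IsDelta0.isArithmetic {φ : Formula} (h : IsDelta0 φ) : φ.IsArithmetic := by
  induction h <;> simp_all [Formula.IsArithmetic]

theorem IsSigma01.isArithmetic {φ : Formula} (h : IsSigma01 φ) : φ.IsArithmetic := by
  induction h with
  | delta0 h => exact h.isArithmetic
  | exN _ _ ih => exact ih

theorem Term.fv_finite : ∀ t : Term, t.fv.Finite
  | .var _ => Set.finite_singleton _
  | .zero | .one => Set.finite_empty
  | .add t s | .mul t s => t.fv_finite.union s.fv_finite

theorem Formula.numFV_finite : ∀ φ : Formula, φ.numFV.Finite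
  | .eq t s | .lt t s => t.fv_finite.union s.fv_finite
  | .mem t _ => t.fv_finite
  | .not φ | .allS _ φ | .exS _ φ => φ.numFV_finite
  | .and φ ψ | .or φ ψ | .imp φ ψ => φ.numFV_finite.union ψ.numFV_finite
  | .allN _ φ | .exN _ φ => φ.numFV_finite.sdiff

theorem Formula.setFV_finite : ∀ φ : Formula, φ.setFV.Finite
  | .eq _ _ | .lt _ _ => Set.finite_empty
  | .mem _ X => Set.finite_singleton X
  | .not φ | .allN _ φ | .exN _ φ => φ.setFV_finite
  | .and φ ψ | .or φ ψ | .imp φ ψ => φ.setFV_finite.union ψ.setFV_finite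
  | .allS _ φ | .exS _ φ => φ.setFV_finite.sdiff

def Term.encode : Term → ℕ
  | .var i => Nat.pair 0 i
  | .zero => Nat.pair 1 0
  | .one => Nat.pair 2 0
  | .add t s => Nat.pair 3 (Nat.pair t.encode s.encode)
  | .mul t s => Nat.pair 4 (Nat.pair t.encode s.encode)

theorem Term.encode_injective : Function.Injective Term.encode := by
  intro t s h
  induction t generalizing s <;> cases s <;> simp only [Term.encode, Nat.pair_eq_pair] at h <;>
    grind

instance : Countable Term := Term.encode_injective.countable

def Formula.encode : Formula → ℕ
  | .eq t s => Nat.pair 0 (Nat.pair t.encode s.encode)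
  | .lt t s => Nat.pair 1 (Nat.pair t.encode s.encode)
  | .mem t X => Nat.pair 2 (Nat.pair t.encode X)
  | .not φ => Nat.pair 3 φ.encode
  | .and φ ψ => Nat.pair 4 (Nat.pair φ.encode ψ.encode)
  | .or φ ψ => Nat.pair 5 (Nat.pair φ.encode ψ.encode)
  | .imp φ ψ => Nat.pair 6 (Nat.pair φ.encode ψ.encode)
  | .allN x φ => Nat.pair 7 (Nat.pair x φ.encode)
  | .exN x φ => Nat.pair 8 (Nat.pair x φ.encode)
  | .allS X φ => Nat.pair 9 (Nat.pair X φ.encode)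
  | .exS X φ => Nat.pair 10 (Nat.pair X φ.encode)

theorem Formula.encode_injective : Function.Injective Formula.encode := by
  intro φ ψ h
  induction φ generalizing ψ <;> cases ψ <;>
    simp only [Formula.encode, Nat.pair_eq_pair, Term.encode_injective.eq_iff] at h <;> grind

instance : Countable Formula := Formula.encode_injective.countable

theorem mem_Mcl_of_mem {M : L1Struc} {Ps : Set (Set M.carrier)} {X : Set M.carrier}
    (hX : X ∈ Ps) : X ∈ Mcl M Ps :=
  ⟨.mem (.var 0) 0, .not (.mem (.var 0) 0), 0, fun _ => M.zero, fun _ => X,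
    .delta0 (.mem _ _), .delta0 (.not (.mem _ _)), fun _ _ => hX,
    fun _ => by simp [Formula.Sat, Term.val], by ext; simp [Formula.Sat, Term.val]⟩

theorem univ_mem_Mcl {M : L1Struc} {Ps : Set (Set M.carrier)} : Set.univ ∈ Mcl M Ps :=
  ⟨.eq .zero .zero, .not (.eq .zero .zero), 0, fun _ => M.zero, fun _ => Set.univ,
    .delta0 (.eq _ _), .delta0 (.not (.eq _ _)),
    fun _ hi => by simp [Formula.setFV] at hi,
    fun _ => by simp [Formula.Sat], by ext; simp [Formula.Sat]⟩

theorem Models2.d01Closed {Γ : Set Formula} {M : L1Struc} {S : Set (Set M.carrier)}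
    (hM : Models2 M S Γ) (hExt : Delta01CA ⊆ Γ) (hS : S.Nonempty) : D01Closed M S := by
  classical
  rintro _ ⟨φ₀, φ₁, x, v, V, h₀, h₁, hVS, hcompl, rfl⟩
  obtain ⟨A₀, hA₀⟩ := hS
  -- `Models2` needs all set variables in `S`: pad `V` outside the free variables
  set V' : ℕ → Set M.carrier := fun i => if V i ∈ S then V i else A₀
  have hV'S : ∀ i, V' i ∈ S := fun i => by
    by_cases h : V i ∈ S <;> simp [V', h, hA₀]
  obtain ⟨Y, hY⟩ := (φ₀.setFV_finite.union φ₁.setFV_finite).infinite_compl.nonempty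
  have hV' : Set.EqOn V' V (φ₀.setFV ∪ φ₁.setFV) := fun i hi => if_pos (hVS i hi)
  have hV'Y : ∀ A, Set.EqOn (Function.update V' Y A) V (φ₀.setFV ∪ φ₁.setFV) := fun A i hi => by
    rw [Function.update_of_ne (ne_of_mem_of_not_mem hi hY)]
    exact hV' hi
  have transfer : ∀ {φ : Formula}, IsSigma01 φ → φ.setFV ⊆ φ₀.setFV ∪ φ₁.setFV →
      ∀ {W : ℕ → Set M.carrier}, Set.EqOn W V (φ₀.setFV ∪ φ₁.setFV) → ∀ a : M.carrier,
        (φ.Sat M S (Function.update v x a) W ↔ φ.Sat M Set.univ (Function.update v x a) V) :=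
    fun {_} hφ hsub {_} hW _ => (Formula.sat_congr _ (Set.eqOn_refl _ _) (hW.mono hsub)).trans
      hφ.isArithmetic.sat_iff
  have hax := hM _ (hExt ⟨φ₀, φ₁, x, Y, h₀, h₁, fun h => hY (.inl h), fun h => hY (.inr h),
    rfl⟩) v V' hV'S
  simp only [Formula.Sat, Formula.iff, Term.val, Function.update_self,
    transfer h₀ Set.subset_union_left hV', transfer h₁ Set.subset_union_right hV',
    transfer h₀ Set.subset_union_left (hV'Y _)] at hax
  obtain ⟨A, hAS, hA⟩ := hax fun a => ⟨(hcompl a).1, (hcompl a).2⟩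
  convert hAS
  ext a
  exact ⟨(hA a).2, (hA a).1⟩

section Runs

variable {P Q : Pi12Problem} {M : L1Struc} {C C' : List (Set M.carrier) → Prop}
  {f : ℕ → Set M.carrier} {g : ℕ → Prop × Set M.carrier}

theorem mem_histL {n : ℕ} {X : Set M.carrier} : X ∈ histL M f n ↔ ∃ i ≤ n, f i = X := by
  simp [histL]

theorem Alive.of_le {m n : ℕ} (hmn : m ≤ n) (h : Alive P Q M C f g n) : Alive P Q M C f g m := by
  induction hmn with
  | refl => exact h
  | step _ ih => exact ih h.1

theorem Alive.cond : ∀ {n : ℕ}, Alive P Q M C f g n → C (histL M f n)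
  | 0, h => h.2
  | _ + 1, h => h.2.2.2.2.2

theorem Alive.of_cond : ∀ {n : ℕ}, (∀ k ≤ n, C' (histL M f k)) →
    Alive P Q M C f g n → Alive P Q M C' f g n
  | 0, hC, h => ⟨h.1, hC 0 le_rfl⟩
  | n + 1, hC, h => ⟨h.1.of_cond fun k hk => hC k (hk.trans n.le_succ),
      h.2.1, h.2.2.1, h.2.2.2.1, h.2.2.2.2.1, hC (n + 1) le_rfl⟩

theorem joinList_histL_succ (n : ℕ) :
    joinList M (histL M f (n + 1)) = joinM M (joinList M (histL M f n)) (f (n + 1)) := by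
  rw [show histL M f (n + 1) = histL M f n ++ [f (n + 1)] by simp [histL, List.range_succ]]
  cases h : histL M f n with
  | nil => simp [histL] at h
  | cons X l => simp [joinList]

end Runs

def joinFormula : Formula :=
  .or (.exN 1 (.and (.mem (.var 1) 0) (.eq (.var 0) (.add (.var 1) (.var 1)))))
    (.exN 1 (.and (.mem (.var 1) 1) (.eq (.var 0) (.add (.add (.var 1) (.var 1)) .one))))

theorem joinFormula_isArithmetic : joinFormula.IsArithmetic :=
  ⟨⟨trivial, trivial⟩, ⟨trivial, trivial⟩⟩

theorem sat_joinFormula {M : L1Struc} {D : Set (Set M.carrier)} {v : ℕ → M.carrier}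
    {V : ℕ → Set M.carrier} : joinFormula.Sat M D v V ↔ v 0 ∈ joinM M (V 0) (V 1) := by
  simp [joinFormula, Formula.Sat, Term.val, joinM]

section Legality

variable {Γ : Set Formula} {θ Λ : Formula} {P Q : Pi12Problem}

def WinsHatAccordingTo (Γ : Set Formula) (θ Λ : Formula) (P Q : Pi12Problem) : Prop :=
  ∀ (M : L1Struc) (S : Set (Set M.carrier)), Countable M.carrier →
    Models2 M S Γ → D01Closed M S → ∀ f g,
      AccordsLambda θ Λ P Q M (CondS M S) f g → P2WinsRun P Q M (CondS M S) f g

theorem AccordsLambda.legal (hExt : Delta01CA ⊆ Γ) (hwin : WinsHatAccordingTo Γ θ Λ P Q)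
    {M : L1Struc} (hM : Countable M.carrier) {f : ℕ → Set M.carrier}
    {g : ℕ → Prop × Set M.carrier} (hacc : AccordsLambda θ Λ P Q M (CondG Γ M) f g)
    {n : ℕ} (halive : Alive P Q M (CondG Γ M) f g n) :
    P2ContMove Q M f g n ∨ P2WinMove P M f g n := by
  by_contra hillegal
  obtain ⟨T, hBT, hT⟩ := halive.cond
  have hcond : ∀ k ≤ n, CondS M T (histL M f k) := fun k hk X hX => by
    obtain ⟨i, hi, rfl⟩ := mem_histL.1 hX
    exact hBT (mem_Mcl_of_mem (mem_histL.2 ⟨i, hi.trans hk, rfl⟩))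
  have hdead : ∀ m, n < m → ¬ Alive P Q M (CondS M T) f g m := fun m hm h =>
    have h' : Alive P Q M (CondS M T) f g (n + 1) := h.of_le hm
    hillegal (.inl ⟨h'.2.1, h'.2.2.1, h'.2.2.2.1⟩)
  have haccT : AccordsLambda θ Λ P Q M (CondS M T) f g := fun m hm =>
    hacc m (halive.of_le (not_lt.1 fun h => hdead m h hm))
  exact hillegal ((hwin M T hM hT (hT.d01Closed hExt ⟨_, hBT univ_mem_Mcl⟩) f g haccT).1 n
    (halive.of_cond hcond))

end Legality

/-- Player 2's reply `Φ_e^{X₀⊕⋯⊕Xₘ}` at stage `m` of a `Λ`-accordant run, not claiming victory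
and answered by Player 1's move `X_{m+1}`. The legality of the reply (membership in
`M[X₀,…,Xₘ]`) is left out: it does not survive ultraproducts and hulls, and in a countable model
it is recovered from the hypothesis on `Ĝ^Γ(Q → P)`. -/
structure PlayStep (θ Λ : Formula) (Q : Pi12Problem) (M : L1Struc) (move : ℕ → Set M.carrier)
    (m : ℕ) (index : M.carrier) (reply : Set M.carrier) : Prop where
  lambda : Λ.Sat M Set.univ (fun k => if k = 0 then numM M m else if k = 1 then index else M.zero)
    (fun _ => joinList M (histL M move m))
  isPhi : IsPhi θ M index (joinList M (histL M move m)) reply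
  not_win : M.zero ∉ reply
  q_inst : Q.Inst M {a | M.add a M.one ∈ reply}
  q_sol : Q.Sol M {a | M.add a M.one ∈ reply} (move (m + 1))

theorem Alive.playStep {θ Λ : Formula} {P Q : Pi12Problem} {M : L1Struc}
    {C : List (Set M.carrier) → Prop} {f : ℕ → Set M.carrier} {g : ℕ → Prop × Set M.carrier}
    (hacc : AccordsLambda θ Λ P Q M C f g) {m : ℕ} (h : Alive P Q M C f g (m + 1)) :
    ∃ p : M.carrier × Set M.carrier, PlayStep θ Λ Q M f m p.1 p.2 := by
  obtain ⟨e, Z, hΛ, hφ, hg⟩ := hacc m h.1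
  obtain ⟨-, hnot_win, -, hinst, hsol, -⟩ := h
  rw [hg] at hnot_win hinst hsol
  exact ⟨(e, Z), hΛ, hφ, hnot_win, hinst, hsol⟩

structure EndlessPlay (θ Λ : Formula) (P Q : Pi12Problem) (M : L1Struc) where
  move : ℕ → Set M.carrier
  index : ℕ → M.carrier
  reply : ℕ → Set M.carrier
  inst : P.Inst M (move 0)
  step : ∀ m, PlayStep θ Λ Q M move m (index m) (reply m)

namespace EndlessPlay

variable {θ Λ : Formula} {P Q : Pi12Problem} {M : L1Struc}

def response (π : EndlessPlay θ Λ P Q M) (m : ℕ) : Prop × Set M.carrier :=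
  (M.zero ∈ π.reply m, {a | M.add a M.one ∈ π.reply m})

theorem false_of_countable {Γ : Set Formula} (hExt : Delta01CA ⊆ Γ)
    (hwin : WinsHatAccordingTo Γ θ Λ P Q) (π : EndlessPlay θ Λ P Q M) (hM : Countable M.carrier)
    {S : Set (Set M.carrier)} (hMS : Models2 M S Γ) (hmove : ∀ m, π.move m ∈ S) : False := by
  have hcond : ∀ m, CondS M S (histL M π.move m) := fun m X hX => by
    obtain ⟨i, -, rfl⟩ := mem_histL.1 hX
    exact hmove i
  have hacc : AccordsLambda θ Λ P Q M (CondS M S) π.move π.response := fun m _ =>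
    ⟨π.index m, π.reply m, (π.step m).lambda, (π.step m).isPhi, rfl⟩
  obtain ⟨hlegal, hends⟩ :=
    hwin M S hM hMS (hMS.d01Closed hExt ⟨_, hmove 0⟩) _ _ hacc
  refine hends fun m => ?_
  induction m with
  | zero => exact ⟨π.inst, hcond 0⟩
  | succ m ih =>
    obtain ⟨-, -, hnot_win, hinst, hsol⟩ := π.step m
    have hboard : (π.response m).2 ∈ Board M (histL M π.move m) := by
      rcases hlegal m ih with h | h
      · exact h.2.1
      · exact absurd h.1 hnot_win
    exact ⟨ih, hnot_win, hboard, hinst, hsol, hcond (m + 1)⟩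

end EndlessPlay

section Hull

variable (M : L1Struc) (S : Set (Set M.carrier))

open Classical in
noncomputable def skolemN (φ : Formula) (x : ℕ) (v : ℕ → M.carrier) (V : ℕ → Set M.carrier) :
    M.carrier :=
  if h : ∃ a, φ.Sat M S (Function.update v x a) V then h.choose else M.zero

open Classical in
noncomputable def skolemS (φ : Formula) (X : ℕ) (v : ℕ → M.carrier) (V : ℕ → Set M.carrier) :
    Set M.carrier :=
  if h : ∃ A ∈ S, φ.Sat M S v (Function.update V X A) then h.choose else ∅

variable {M S}

theorem skolemN_spec {φ : Formula} {x : ℕ} {v : ℕ → M.carrier} {V : ℕ → Set M.carrier}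
    (h : ∃ a, φ.Sat M S (Function.update v x a) V) :
    φ.Sat M S (Function.update v x (skolemN M S φ x v V)) V := by
  rw [skolemN, dif_pos h]
  exact h.choose_spec

theorem skolemS_spec {φ : Formula} {X : ℕ} {v : ℕ → M.carrier} {V : ℕ → Set M.carrier}
    (h : ∃ A ∈ S, φ.Sat M S v (Function.update V X A)) :
    skolemS M S φ X v V ∈ S ∧ φ.Sat M S v (Function.update V X (skolemS M S φ X v V)) := by
  rw [skolemS, dif_pos h]
  exact h.choose_spec

/-- Skolem witnesses are only taken at finitely supported parameters, so that every stage of the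
hull stays countable. -/
def extendFin {α : Type*} (d : α) {m : ℕ} (w : Fin m → α) (i : ℕ) : α :=
  if h : i < m then w ⟨i, h⟩ else d

abbrev FinParams (N : Set M.carrier) (F : Set (Set M.carrier)) : Type :=
  Σ m : ℕ, (Fin m → N) × (Fin m → F)

variable {N : Set M.carrier} {F : Set (Set M.carrier)}

def FinParams.val (q : FinParams N F) : ℕ → M.carrier :=
  extendFin M.zero fun i => (q.2.1 i : M.carrier)

def FinParams.sets (q : FinParams N F) : ℕ → Set M.carrier :=
  extendFin ∅ fun i => (q.2.2 i : Set M.carrier)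

variable (M S) (N₀ : Set M.carrier) (F₀ : Set (Set M.carrier))

/-- Seeded with `0` and `∅` so that both sorts of the hull are inhabited. -/
noncomputable def hullStage : ℕ → Set M.carrier × Set (Set M.carrier)
  | 0 => (insert M.zero N₀, insert ∅ F₀)
  | k + 1 =>
    ((hullStage k).1 ∪ Set.range fun q : Formula × ℕ × FinParams (hullStage k).1 (hullStage k).2 =>
        skolemN M S q.1 q.2.1 q.2.2.val q.2.2.sets,
      (hullStage k).2 ∪ Set.range fun q : Formula × ℕ × FinParams (hullStage k).1 (hullStage k).2 =>
        skolemS M S q.1 q.2.1 q.2.2.val q.2.2.sets)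

def hullN : Set M.carrier := ⋃ k, (hullStage M S N₀ F₀ k).1

def hullF : Set (Set M.carrier) := ⋃ k, (hullStage M S N₀ F₀ k).2

variable {M S N₀ F₀}

theorem hullStage_mono : Monotone (hullStage M S N₀ F₀) :=
  monotone_nat_of_le_succ fun _ => ⟨Set.subset_union_left, Set.subset_union_left⟩

theorem hullStage_countable (hN₀ : N₀.Countable) (hF₀ : F₀.Countable) :
    ∀ k, (hullStage M S N₀ F₀ k).1.Countable ∧ (hullStage M S N₀ F₀ k).2.Countable
  | 0 => ⟨hN₀.insert _, hF₀.insert _⟩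
  | k + 1 => by
    obtain ⟨hN, hF⟩ := hullStage_countable hN₀ hF₀ k
    have := hN.to_subtype
    have := hF.to_subtype
    exact ⟨hN.union (Set.countable_range _), hF.union (Set.countable_range _)⟩

theorem hullN_countable (hN₀ : N₀.Countable) (hF₀ : F₀.Countable) :
    (hullN M S N₀ F₀).Countable :=
  Set.countable_iUnion fun k => (hullStage_countable hN₀ hF₀ k).1

theorem subset_hullN : N₀ ⊆ hullN M S N₀ F₀ :=
  fun _ ha => Set.mem_iUnion.2 ⟨0, .inr ha⟩

theorem subset_hullF : F₀ ⊆ hullF M S N₀ F₀ :=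
  fun _ hA => Set.mem_iUnion.2 ⟨0, .inr hA⟩

theorem zero_mem_hullN : M.zero ∈ hullN M S N₀ F₀ :=
  Set.mem_iUnion.2 ⟨0, .inl rfl⟩

theorem empty_mem_hullF : ∅ ∈ hullF M S N₀ F₀ :=
  Set.mem_iUnion.2 ⟨0, .inl rfl⟩

theorem exists_finParams {v : ℕ → M.carrier} {V : ℕ → Set M.carrier}
    (hv : ∀ i, v i ∈ hullN M S N₀ F₀) (hV : ∀ i, V i ∈ hullF M S N₀ F₀)
    {s : Set ℕ} (hs : s.Finite) :
    ∃ k, ∃ q : FinParams (hullStage M S N₀ F₀ k).1 (hullStage M S N₀ F₀ k).2,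
      Set.EqOn q.val v s ∧ Set.EqOn q.sets V s := by
  obtain ⟨b, hb⟩ := hs.bddAbove
  choose kv hkv using fun i => Set.mem_iUnion.1 (hv i)
  choose kV hkV using fun i => Set.mem_iUnion.1 (hV i)
  set k := (Finset.univ : Finset (Fin (b + 1))).sup fun i => kv i ⊔ kV i
  have hk : ∀ i : Fin (b + 1), kv i ⊔ kV i ≤ k := fun i =>
    Finset.le_sup (f := fun i : Fin (b + 1) => kv i ⊔ kV i) (Finset.mem_univ i)
  refine ⟨k, ⟨b + 1, fun i => ⟨v i, (hullStage_mono (le_sup_left.trans (hk i))).1 (hkv i)⟩,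
    fun i => ⟨V i, (hullStage_mono (le_sup_right.trans (hk i))).2 (hkV i)⟩⟩, ?_, ?_⟩ <;>
  · intro i hi
    simp [FinParams.val, FinParams.sets, extendFin, Nat.lt_succ_of_le (hb hi)]

theorem exists_mem_hullN_of_exists {φ : Formula} {x : ℕ} {v : ℕ → M.carrier}
    {V : ℕ → Set M.carrier} (hv : ∀ i, v i ∈ hullN M S N₀ F₀)
    (hV : ∀ i, V i ∈ hullF M S N₀ F₀) (h : ∃ a, φ.Sat M S (Function.update v x a) V) :
    ∃ a ∈ hullN M S N₀ F₀, φ.Sat M S (Function.update v x a) V := by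
  obtain ⟨k, q, hqv, hqV⟩ := exists_finParams hv hV (φ.numFV_finite.union φ.setFV_finite)
  have hiff : ∀ a, φ.Sat M S (Function.update q.val x a) q.sets ↔
      φ.Sat M S (Function.update v x a) V := fun a =>
    φ.sat_congr (eqOn_update (hqv.mono (Set.sdiff_subset.trans Set.subset_union_left)) a)
      (hqV.mono Set.subset_union_right)
  exact ⟨_, Set.mem_iUnion.2 ⟨k + 1, .inr ⟨(φ, x, q), rfl⟩⟩,
    (hiff _).1 (skolemN_spec ((exists_congr hiff).2 h))⟩

theorem exists_mem_hullF_of_exists {φ : Formula} {X : ℕ} {v : ℕ → M.carrier}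
    {V : ℕ → Set M.carrier} (hv : ∀ i, v i ∈ hullN M S N₀ F₀)
    (hV : ∀ i, V i ∈ hullF M S N₀ F₀) (h : ∃ A ∈ S, φ.Sat M S v (Function.update V X A)) :
    ∃ A ∈ hullF M S N₀ F₀ ∩ S, φ.Sat M S v (Function.update V X A) := by
  obtain ⟨k, q, hqv, hqV⟩ := exists_finParams hv hV (φ.numFV_finite.union φ.setFV_finite)
  have hiff : ∀ A, φ.Sat M S q.val (Function.update q.sets X A) ↔
      φ.Sat M S v (Function.update V X A) := fun A =>
    φ.sat_congr (hqv.mono Set.subset_union_left)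
      (eqOn_update (hqV.mono (Set.sdiff_subset.trans Set.subset_union_right)) A)
  obtain ⟨hS, hsat⟩ := skolemS_spec (h.imp fun A hA => ⟨hA.1, (hiff A).2 hA.2⟩)
  exact ⟨_, ⟨Set.mem_iUnion.2 ⟨k + 1, .inr ⟨(φ, X, q), rfl⟩⟩, hS⟩, (hiff _).1 hsat⟩

theorem Term.val_mem_hullN (t : Term) {v : ℕ → M.carrier} (hv : ∀ i, v i ∈ hullN M S N₀ F₀) :
    t.val M v ∈ hullN M S N₀ F₀ := by
  obtain ⟨y, hy⟩ := t.fv_finite.infinite_compl.nonempty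
  have hval : ∀ a, t.val M (Function.update v y a) = t.val M v := fun a =>
    t.val_congr fun i hi => Function.update_of_ne (ne_of_mem_of_not_mem hi hy) _ _
  obtain ⟨a, ha, hsat⟩ := exists_mem_hullN_of_exists (φ := .eq (.var y) t) (x := y) hv
    (fun _ => empty_mem_hullF) ⟨t.val M v, by simp [Formula.Sat, Term.val, hval]⟩
  simp only [Formula.Sat, Term.val, Function.update_self, hval] at hsat
  exact hsat ▸ ha

end Hull

section HullStructure

variable {M : L1Struc} {S : Set (Set M.carrier)} {N₀ : Set M.carrier} {F₀ : Set (Set M.carrier)}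

theorem add_mem_hullN {a b : M.carrier} (ha : a ∈ hullN M S N₀ F₀) (hb : b ∈ hullN M S N₀ F₀) :
    M.add a b ∈ hullN M S N₀ F₀ :=
  (Term.add (.var 0) (.var 1)).val_mem_hullN (v := fun i => if i = 0 then a else b)
    fun i => by split_ifs <;> assumption

theorem mul_mem_hullN {a b : M.carrier} (ha : a ∈ hullN M S N₀ F₀) (hb : b ∈ hullN M S N₀ F₀) :
    M.mul a b ∈ hullN M S N₀ F₀ :=
  (Term.mul (.var 0) (.var 1)).val_mem_hullN (v := fun i => if i = 0 then a else b)
    fun i => by split_ifs <;> assumption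

variable (M S N₀ F₀)

abbrev hullStr : L1Struc where
  carrier := hullN M S N₀ F₀
  zero := ⟨M.zero, zero_mem_hullN⟩
  one := ⟨M.one, Term.one.val_mem_hullN fun _ => zero_mem_hullN⟩
  add a b := ⟨M.add a b, add_mem_hullN a.2 b.2⟩
  mul a b := ⟨M.mul a b, mul_mem_hullN a.2 b.2⟩
  lt a b := M.lt a b

def hullSets : Set (Set (hullStr M S N₀ F₀).carrier) :=
  (Subtype.val ⁻¹' ·) '' (hullF M S N₀ F₀ ∩ S)

variable {M S N₀ F₀}

theorem Term.val_hullStr (t : Term) (v : ℕ → (hullStr M S N₀ F₀).carrier) :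
    (t.val (hullStr M S N₀ F₀) v).1 = t.val M (Subtype.val ∘ v) := by
  induction t with
  | var | zero | one => rfl
  | add t s iht ihs | mul t s iht ihs => simp only [Term.val, ← iht, ← ihs]

def HullElementary (M : L1Struc) (S : Set (Set M.carrier)) (N₀ : Set M.carrier)
    (F₀ : Set (Set M.carrier)) (φ : Formula) : Prop :=
  ∀ (v : ℕ → (hullStr M S N₀ F₀).carrier) (V : ℕ → Set M.carrier),
    (∀ i, V i ∈ hullF M S N₀ F₀) →
    (φ.Sat (hullStr M S N₀ F₀) (hullSets M S N₀ F₀) v ((Subtype.val ⁻¹' ·) ∘ V) ↔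
      φ.Sat M S (Subtype.val ∘ v) V)

theorem HullElementary.exN {φ : Formula} (h : HullElementary M S N₀ F₀ φ) (x : ℕ) :
    HullElementary M S N₀ F₀ (.exN x φ) := by
  intro v V hV
  simp only [Formula.Sat]
  constructor
  · rintro ⟨a, ha⟩
    exact ⟨a, by simpa only [Function.comp_update] using (h _ V hV).1 ha⟩
  · rintro ⟨a, ha⟩
    obtain ⟨b, hb, hsat⟩ :=
      exists_mem_hullN_of_exists (v := Subtype.val ∘ v) (fun i => (v i).2) hV ⟨a, ha⟩
    refine ⟨⟨b, hb⟩, (h _ V hV).2 ?_⟩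
    rwa [Function.comp_update]

theorem HullElementary.exS {φ : Formula} (h : HullElementary M S N₀ F₀ φ) (X : ℕ) :
    HullElementary M S N₀ F₀ (.exS X φ) := by
  intro v V hV
  have hV' : ∀ {A}, A ∈ hullF M S N₀ F₀ → ∀ i, Function.update V X A i ∈ hullF M S N₀ F₀ :=
    fun hA i => by rcases eq_or_ne i X with rfl | hi <;> simp [*]
  simp only [Formula.Sat]
  constructor
  · rintro ⟨_, ⟨A, ⟨hAF, hAS⟩, rfl⟩, hsat⟩
    rw [← Function.comp_update] at hsat
    exact ⟨A, hAS, (h v _ (hV' hAF)).1 hsat⟩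
  · rintro ⟨A, hAS, hsat⟩
    obtain ⟨B, ⟨hBF, hBS⟩, hB⟩ := exists_mem_hullF_of_exists (fun i => (v i).2) hV ⟨A, hAS, hsat⟩
    refine ⟨_, ⟨B, ⟨hBF, hBS⟩, rfl⟩, ?_⟩
    rw [← Function.comp_update]
    exact (h v _ (hV' hBF)).2 hB

/-- Tarski–Vaught: the Skolem witnesses make the hull an elementary substructure. -/
theorem hullElementary : ∀ φ : Formula, HullElementary M S N₀ F₀ φ
  | .eq t s, v, V, _ => by
    simp only [Formula.Sat, ← Term.val_hullStr]
    exact Subtype.ext_iff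
  | .lt t s, v, V, _ => by
    simp only [Formula.Sat, ← Term.val_hullStr]
  | .mem t X, v, V, _ => by
    simp only [Formula.Sat, ← Term.val_hullStr]; rfl
  | .not φ, v, V, hV => not_congr (hullElementary φ v V hV)
  | .and φ ψ, v, V, hV => and_congr (hullElementary φ v V hV) (hullElementary ψ v V hV)
  | .or φ ψ, v, V, hV => or_congr (hullElementary φ v V hV) (hullElementary ψ v V hV)
  | .imp φ ψ, v, V, hV => imp_congr (hullElementary φ v V hV) (hullElementary ψ v V hV)
  | .exN x φ, v, V, hV => (hullElementary φ).exN x v V hV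
  | .exS X φ, v, V, hV => (hullElementary φ).exS X v V hV
  | .allN x φ, v, V, hV => by
    rw [Formula.sat_allN_iff, Formula.sat_allN_iff]
    exact not_congr (HullElementary.exN (φ := φ.not)
      (fun v V hV => not_congr (hullElementary φ v V hV)) x v V hV)
  | .allS X φ, v, V, hV => by
    rw [Formula.sat_allS_iff, Formula.sat_allS_iff]
    exact not_congr (HullElementary.exS (φ := φ.not)
      (fun v V hV => not_congr (hullElementary φ v V hV)) X v V hV)

theorem models2_hullStr {Γ : Set Formula} (h : Models2 M S Γ) :
    Models2 (hullStr M S N₀ F₀) (hullSets M S N₀ F₀) Γ := by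
  intro φ hφ v V hV
  choose A hA hVA using hV
  obtain rfl : V = (Subtype.val ⁻¹' ·) ∘ A := funext fun i => (hVA i).symm
  exact (hullElementary φ v A fun i => (hA i).1).2 (h φ hφ _ A fun i => (hA i).2)

end HullStructure

section HullTransfer

variable {M : L1Struc} {S : Set (Set M.carrier)} {N₀ : Set M.carrier} {F₀ : Set (Set M.carrier)}

theorem sat_hullStr_iff {φ : Formula} (hφ : φ.IsArithmetic)
    {D : Set (Set (hullStr M S N₀ F₀).carrier)} {D' : Set (Set M.carrier)}
    {v : ℕ → (hullStr M S N₀ F₀).carrier} {V' : ℕ → Set (hullStr M S N₀ F₀).carrier}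
    {v' : ℕ → M.carrier} {V : ℕ → Set M.carrier} (hv : ∀ i, (v i).1 = v' i)
    (hV : ∀ i, V' i = Subtype.val ⁻¹' V i) (hVF : ∀ i, V i ∈ hullF M S N₀ F₀) :
    φ.Sat (hullStr M S N₀ F₀) D v V' ↔ φ.Sat M D' v' V := by
  obtain rfl : v' = Subtype.val ∘ v := funext fun i => (hv i).symm
  obtain rfl : V' = (Subtype.val ⁻¹' ·) ∘ V := funext hV
  exact hφ.sat_iff.trans ((hullElementary φ v V hVF).trans hφ.sat_iff)

theorem inst_hullStr {P : Pi12Problem} (hP : P.theta.IsArithmetic) {X : Set M.carrier}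
    (hX : X ∈ hullF M S N₀ F₀) : P.Inst (hullStr M S N₀ F₀) (Subtype.val ⁻¹' X) ↔ P.Inst M X :=
  sat_hullStr_iff hP (fun _ => rfl) (fun _ => rfl) fun _ => hX

theorem sol_hullStr {P : Pi12Problem} (hP : P.psi.IsArithmetic) {X Y : Set M.carrier}
    (hX : X ∈ hullF M S N₀ F₀) (hY : Y ∈ hullF M S N₀ F₀) :
    P.Sol (hullStr M S N₀ F₀) (Subtype.val ⁻¹' X) (Subtype.val ⁻¹' Y) ↔ P.Sol M X Y :=
  sat_hullStr_iff hP (fun _ => rfl) (fun _ => by split_ifs <;> rfl)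
    fun _ => by split_ifs <;> assumption

theorem satIdx_hullStr {θ : Formula} (hθ : θ.IsArithmetic) (i a : (hullStr M S N₀ F₀).carrier)
    {X : Set M.carrier} (hX : X ∈ hullF M S N₀ F₀) :
    satIdx θ (hullStr M S N₀ F₀) i a (Subtype.val ⁻¹' X) ↔ satIdx θ M i a X :=
  sat_hullStr_iff hθ (fun _ => by split_ifs <;> rfl) (fun _ => rfl) fun _ => hX

theorem isPhi_hullStr {θ : Formula} (hθ : θ.IsArithmetic) {e i j : (hullStr M S N₀ F₀).carrier}
    {X Z : Set M.carrier} (hX : X ∈ hullF M S N₀ F₀) (hcant : cantorPairRel M i j e)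
    (hij : ∀ a, satIdx θ M i a X ↔ ¬ satIdx θ M j a X)
    (hZ : ∀ a, a ∈ Z ↔ satIdx θ M i a X) :
    IsPhi θ (hullStr M S N₀ F₀) e (Subtype.val ⁻¹' X) (Subtype.val ⁻¹' Z) :=
  ⟨i, j, Subtype.ext hcant, fun a => (satIdx_hullStr hθ i a hX).trans
      ((hij a).trans (not_congr (satIdx_hullStr hθ j a hX).symm)),
    fun a => (hZ a).trans (satIdx_hullStr hθ i a hX).symm⟩

theorem numM_hullStr (m : ℕ) : (numM (hullStr M S N₀ F₀) m).1 = numM M m := by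
  induction m with
  | zero => rfl
  | succ m ih => exact congrArg (M.add · M.one) ih

theorem joinM_hullStr {A B : Set M.carrier} (hA : A ∈ hullF M S N₀ F₀)
    (hB : B ∈ hullF M S N₀ F₀) :
    joinM (hullStr M S N₀ F₀) (Subtype.val ⁻¹' A) (Subtype.val ⁻¹' B) =
      Subtype.val ⁻¹' joinM M A B := by
  ext c
  simpa [sat_joinFormula] using sat_hullStr_iff joinFormula_isArithmetic (D := Set.univ)
    (D' := Set.univ) (v := fun _ => c) (v' := fun _ => c.1)
    (V' := fun i => Subtype.val ⁻¹' if i = 0 then A else B) (V := fun i => if i = 0 then A else B)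
    (fun _ => rfl) (fun _ => rfl) fun i => by split_ifs <;> assumption

theorem joinList_histL_hullStr {f : ℕ → Set M.carrier} (hf : ∀ m, f m ∈ hullF M S N₀ F₀)
    (hJ : ∀ m, joinList M (histL M f m) ∈ hullF M S N₀ F₀) (m : ℕ) :
    joinList (hullStr M S N₀ F₀) (histL _ (fun k => Subtype.val ⁻¹' f k) m) =
      Subtype.val ⁻¹' joinList M (histL M f m) := by
  induction m with
  | zero => rfl
  | succ m ih => rw [joinList_histL_succ, ih, joinM_hullStr (hJ m) (hf _), ← joinList_histL_succ]

end HullTransfer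

namespace EndlessPlay

variable {θ Λ : Formula} {P Q : Pi12Problem} {M : L1Struc}

theorem exists_countable {Γ : Set Formula} (hθ : θ.IsArithmetic) (hΛ : Λ.IsArithmetic)
    (hP : P.theta.IsArithmetic) (hQθ : Q.theta.IsArithmetic) (hQψ : Q.psi.IsArithmetic)
    (π : EndlessPlay θ Λ P Q M) {S : Set (Set M.carrier)} (hMS : Models2 M S Γ)
    (hmove : ∀ m, π.move m ∈ S) :
    ∃ (M' : L1Struc) (S' : Set (Set M'.carrier)) (π' : EndlessPlay θ Λ P Q M'),
      Countable M'.carrier ∧ Models2 M' S' Γ ∧ ∀ m, π'.move m ∈ S' := by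
  choose i j hcant hij hreply using fun m => (π.step m).isPhi
  set N₀ := Set.range π.index ∪ Set.range i ∪ Set.range j
  set F₀ := Set.range π.move ∪ Set.range (fun m => joinList M (histL M π.move m)) ∪
    Set.range fun m => {a | M.add a M.one ∈ π.reply m}
  have hN : N₀ ⊆ hullN M S N₀ F₀ := subset_hullN
  have hF : F₀ ⊆ hullF M S N₀ F₀ := subset_hullF
  have hmoveF : ∀ m, π.move m ∈ hullF M S N₀ F₀ := fun m => hF (.inl (.inl ⟨m, rfl⟩))
  have hJF : ∀ m, joinList M (histL M π.move m) ∈ hullF M S N₀ F₀ := fun m =>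
    hF (.inl (.inr ⟨m, rfl⟩))
  have hJ := joinList_histL_hullStr hmoveF hJF
  refine ⟨hullStr M S N₀ F₀, hullSets M S N₀ F₀,
    ⟨fun m => Subtype.val ⁻¹' π.move m, fun m => ⟨π.index m, hN (.inl (.inl ⟨m, rfl⟩))⟩,
      fun m => Subtype.val ⁻¹' π.reply m, (inst_hullStr hP (hmoveF 0)).2 π.inst, fun m => ?_⟩,
    (hullN_countable (((Set.countable_range _).union (Set.countable_range _)).union
      (Set.countable_range _)) (((Set.countable_range _).union (Set.countable_range _)).union
      (Set.countable_range _))).to_subtype,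
    models2_hullStr hMS, fun m => ⟨π.move m, ⟨hmoveF m, hmove m⟩, rfl⟩⟩
  obtain ⟨hlambda, -, hnot_win, hinst, hsol⟩ := π.step m
  refine ⟨?_, hJ m ▸ isPhi_hullStr (i := ⟨i m, hN (.inl (.inr ⟨m, rfl⟩))⟩)
      (j := ⟨j m, hN (.inr ⟨m, rfl⟩)⟩) hθ (hJF m) (hcant m) (hij m) (hreply m),
    hnot_win, (inst_hullStr hQθ (hF (.inr ⟨m, rfl⟩))).2 hinst,
    (sol_hullStr hQψ (hF (.inr ⟨m, rfl⟩)) (hmoveF _)).2 hsol⟩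
  rw [hJ]
  refine (sat_hullStr_iff hΛ (fun k => ?_) (fun _ => rfl) fun _ => hJF m).2 hlambda
  split_ifs
  exacts [numM_hullStr m, rfl, rfl]

end EndlessPlay

section Ultraproduct

variable (U : Ultrafilter ℕ) (Mi : ℕ → L1Struc)

def ultraStr : L1Struc where
  carrier := (U : Filter ℕ).Product fun n => (Mi n).carrier
  zero := Quotient.mk'' fun n => (Mi n).zero
  one := Quotient.mk'' fun n => (Mi n).one
  add := Quotient.map₂' (fun x y n => (Mi n).add (x n) (y n)) fun _ _ hx _ _ hy =>
    (hx.and hy).mono fun _ h => by simp only [h.1, h.2]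
  mul := Quotient.map₂' (fun x y n => (Mi n).mul (x n) (y n)) fun _ _ hx _ _ hy =>
    (hx.and hy).mono fun _ h => by simp only [h.1, h.2]
  lt a b := Quotient.liftOn₂' a b (fun x y => ∀ᶠ n in U, (Mi n).lt (x n) (y n))
    fun _ _ _ _ hx hy => propext <| Filter.eventually_congr <|
      (hx.and hy).mono fun _ h => by simp only [h.1, h.2]

def ultraMk (x : ∀ n, (Mi n).carrier) : (ultraStr U Mi).carrier := Quotient.mk'' x

def ultraSet (A : ∀ n, Set (Mi n).carrier) : Set (ultraStr U Mi).carrier :=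
  fun c => Quotient.liftOn' c (fun x => ∀ᶠ n in U, x n ∈ A n) fun _ _ h =>
    propext <| Filter.eventually_congr <| h.mono fun _ h => by simp only [h]

def ultraSets (Ti : ∀ n, Set (Set (Mi n).carrier)) : Set (Set (ultraStr U Mi).carrier) :=
  Set.range fun A : ∀ n, Ti n => ultraSet U Mi fun n => A n

variable {U Mi}

theorem ultraMk_surjective : Function.Surjective (ultraMk U Mi) :=
  Quotient.mk''_surjective

theorem ultraMk_eq_ultraMk {x y : ∀ n, (Mi n).carrier} :
    ultraMk U Mi x = ultraMk U Mi y ↔ ∀ᶠ n in U, x n = y n :=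
  Quotient.eq''

theorem ultraMk_mem_ultraSet {x : ∀ n, (Mi n).carrier} {A : ∀ n, Set (Mi n).carrier} :
    ultraMk U Mi x ∈ ultraSet U Mi A ↔ ∀ᶠ n in U, x n ∈ A n :=
  Iff.rfl

theorem ultraSet_congr {A B : ∀ n, Set (Mi n).carrier} (h : ∀ᶠ n in U, A n = B n) :
    ultraSet U Mi A = ultraSet U Mi B := by
  ext c
  obtain ⟨x, rfl⟩ := ultraMk_surjective c
  exact Filter.eventually_congr (h.mono fun n hn => by rw [hn])

theorem ultraSet_mem_ultraSets {Ti : ∀ n, Set (Set (Mi n).carrier)} (hT : ∀ n, (Ti n).Nonempty)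
    {A : ∀ n, Set (Mi n).carrier} (h : ∀ᶠ n in U, A n ∈ Ti n) :
    ultraSet U Mi A ∈ ultraSets U Mi Ti := by
  classical
  exact ⟨fun n => if hA : A n ∈ Ti n then ⟨A n, hA⟩ else ⟨_, (hT n).some_mem⟩,
    ultraSet_congr (h.mono fun n hn => by simp [hn])⟩

theorem Term.val_ultraStr (t : Term) (v : ℕ → ∀ n, (Mi n).carrier) :
    t.val (ultraStr U Mi) (ultraMk U Mi ∘ v) = ultraMk U Mi fun n => t.val (Mi n) ((· n) ∘ v) := by
  induction t with
  | var | zero | one => rfl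
  | add t s iht ihs | mul t s iht ihs => simp only [Term.val, iht, ihs]; rfl

def UltraElementary (U : Ultrafilter ℕ) (Mi : ℕ → L1Struc) (Ti : ∀ n, Set (Set (Mi n).carrier))
    (φ : Formula) : Prop :=
  ∀ (v : ℕ → ∀ n, (Mi n).carrier) (V : ℕ → ∀ n, Set (Mi n).carrier),
    φ.Sat (ultraStr U Mi) (ultraSets U Mi Ti) (ultraMk U Mi ∘ v) (ultraSet U Mi ∘ V) ↔
      ∀ᶠ n in U, φ.Sat (Mi n) (Ti n) ((· n) ∘ v) ((· n) ∘ V)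

variable {Ti : ∀ n, Set (Set (Mi n).carrier)}

theorem UltraElementary.exN {φ : Formula} (h : UltraElementary U Mi Ti φ) (x : ℕ) :
    UltraElementary U Mi Ti (.exN x φ) := by
  intro v V
  simp only [Formula.Sat]
  rw [ultraMk_surjective.exists, Filter.skolem]
  exact exists_congr fun a => by rw [← Function.comp_update, h]; simp only [Function.comp_update]

theorem UltraElementary.exS {φ : Formula} (h : UltraElementary U Mi Ti φ) (X : ℕ)
    (hT : ∀ n, (Ti n).Nonempty) : UltraElementary U Mi Ti (.exS X φ) := by
  intro v V
  have : ∀ n, Nonempty (Ti n) := fun n => (hT n).to_subtype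
  simp only [Formula.Sat]
  rw [ultraSets, Set.exists_range_iff]
  trans ∀ᶠ n in U, ∃ A : Ti n, φ.Sat (Mi n) (Ti n) ((· n) ∘ v) (Function.update ((· n) ∘ V) X A)
  · rw [Filter.skolem]
    exact exists_congr fun A => by
      rw [← Function.comp_update]
      exact (h v _).trans (by simp only [Function.comp_update])
  · simp only [Subtype.exists, exists_prop]

theorem UltraElementary.not {φ : Formula} (h : UltraElementary U Mi Ti φ) :
    UltraElementary U Mi Ti φ.not := fun v V =>
  (not_congr (h v V)).trans Ultrafilter.eventually_not.symm

theorem ultraElementary (hT : ∀ n, (Ti n).Nonempty) : ∀ φ : Formula, UltraElementary U Mi Ti φ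
  | .eq t s, v, V => by
    simp only [Formula.Sat, Term.val_ultraStr]
    exact ultraMk_eq_ultraMk
  | .lt t s, v, V | .mem t X, v, V => by
    simp only [Formula.Sat, Term.val_ultraStr]
    rfl
  | .not φ, v, V => (ultraElementary hT φ).not v V
  | .and φ ψ, v, V =>
    (and_congr (ultraElementary hT φ v V) (ultraElementary hT ψ v V)).trans
      Filter.eventually_and.symm
  | .or φ ψ, v, V =>
    (or_congr (ultraElementary hT φ v V) (ultraElementary hT ψ v V)).trans
      Ultrafilter.eventually_or.symm
  | .imp φ ψ, v, V =>
    (imp_congr (ultraElementary hT φ v V) (ultraElementary hT ψ v V)).trans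
      Ultrafilter.eventually_imp.symm
  | .exN x φ, v, V => (ultraElementary hT φ).exN x v V
  | .exS X φ, v, V => (ultraElementary hT φ).exS X hT v V
  | .allN x φ, v, V => by
    simp only [Formula.sat_allN_iff]
    exact ((ultraElementary hT φ).not.exN x).not v V
  | .allS X φ, v, V => by
    simp only [Formula.sat_allS_iff]
    exact ((ultraElementary hT φ).not.exS X hT).not v V

theorem models2_ultraStr (hT : ∀ n, (Ti n).Nonempty) {Γ : Set Formula}
    (h : ∀ n, Models2 (Mi n) (Ti n) Γ) : Models2 (ultraStr U Mi) (ultraSets U Mi Ti) Γ := by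
  intro φ hφ v V hV
  choose A hA using hV
  choose x hx using fun i => ultraMk_surjective (v i)
  obtain rfl : v = ultraMk U Mi ∘ x := funext fun i => (hx i).symm
  obtain rfl : V = ultraSet U Mi ∘ fun i n => A i n := funext fun i => (hA i).symm
  exact (ultraElementary hT φ x _).2 (.of_forall fun n => h n φ hφ _ _ fun i => (A i n).2)

end Ultraproduct

section UltraTransfer

variable {U : Ultrafilter ℕ} {Mi : ℕ → L1Struc}

theorem sat_ultraStr_iff {φ : Formula} (hφ : φ.IsArithmetic)
    {D : Set (Set (ultraStr U Mi).carrier)} {D' : ∀ n, Set (Set (Mi n).carrier)}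
    {v' : ℕ → (ultraStr U Mi).carrier} {V' : ℕ → Set (ultraStr U Mi).carrier}
    {v : ℕ → ∀ n, (Mi n).carrier} {V : ℕ → ∀ n, Set (Mi n).carrier}
    (hv : ∀ i, v' i = ultraMk U Mi (v i)) (hV : ∀ i, V' i = ultraSet U Mi (V i)) :
    φ.Sat (ultraStr U Mi) D v' V' ↔
      ∀ᶠ n in U, φ.Sat (Mi n) (D' n) (fun i => v i n) fun i => V i n := by
  obtain rfl : v' = ultraMk U Mi ∘ v := funext hv
  obtain rfl : V' = ultraSet U Mi ∘ V := funext hV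
  exact hφ.sat_iff.trans ((ultraElementary (Ti := fun _ => Set.univ)
    (fun _ => Set.univ_nonempty) φ v V).trans
    (Filter.eventually_congr (.of_forall fun _ => hφ.sat_iff)))

theorem inst_ultraStr {P : Pi12Problem} (hP : P.theta.IsArithmetic) {A : ∀ n, Set (Mi n).carrier} :
    P.Inst (ultraStr U Mi) (ultraSet U Mi A) ↔ ∀ᶠ n in U, P.Inst (Mi n) (A n) :=
  sat_ultraStr_iff hP (v := fun _ n => (Mi n).zero) (fun _ => rfl) fun _ => rfl

theorem sol_ultraStr {P : Pi12Problem} (hP : P.psi.IsArithmetic) {A B : ∀ n, Set (Mi n).carrier} :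
    P.Sol (ultraStr U Mi) (ultraSet U Mi A) (ultraSet U Mi B) ↔
      ∀ᶠ n in U, P.Sol (Mi n) (A n) (B n) :=
  sat_ultraStr_iff hP (v := fun _ n => (Mi n).zero) (V := fun i n => if i = 0 then A n else B n)
    (V' := fun i => if i = 0 then ultraSet U Mi A else ultraSet U Mi B) (fun _ => rfl)
    fun _ => by split_ifs <;> rfl

theorem satIdx_ultraStr {θ : Formula} (hθ : θ.IsArithmetic) (i a : ∀ n, (Mi n).carrier)
    (X : ∀ n, Set (Mi n).carrier) :
    satIdx θ (ultraStr U Mi) (ultraMk U Mi i) (ultraMk U Mi a) (ultraSet U Mi X) ↔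
      ∀ᶠ n in U, satIdx θ (Mi n) (i n) (a n) (X n) :=
  sat_ultraStr_iff hθ (v := fun k n => if k = 0 then i n else if k = 1 then a n else (Mi n).zero)
    (fun _ => by split_ifs <;> rfl) fun _ => rfl

theorem isPhi_ultraStr {θ : Formula} (hθ : θ.IsArithmetic) {e : ∀ n, (Mi n).carrier}
    {X Z : ∀ n, Set (Mi n).carrier} (h : ∀ᶠ n in U, IsPhi θ (Mi n) (e n) (X n) (Z n)) :
    IsPhi θ (ultraStr U Mi) (ultraMk U Mi e) (ultraSet U Mi X) (ultraSet U Mi Z) := by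
  unfold IsPhi at h
  obtain ⟨i, hi⟩ := Filter.skolem.1 h
  obtain ⟨j, hij⟩ := Filter.skolem.1 hi
  refine ⟨ultraMk U Mi i, ultraMk U Mi j,
    ultraMk_eq_ultraMk.2 (hij.mono fun _ h => h.1), fun c => ?_, fun c => ?_⟩ <;>
  obtain ⟨a, rfl⟩ := ultraMk_surjective c
  · rw [satIdx_ultraStr hθ, satIdx_ultraStr hθ, ← Ultrafilter.eventually_not]
    exact Filter.eventually_congr (hij.mono fun _ h => h.2.1 _)
  · rw [ultraMk_mem_ultraSet, satIdx_ultraStr hθ]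
    exact Filter.eventually_congr (hij.mono fun _ h => h.2.2 _)

theorem numM_ultraStr (m : ℕ) : numM (ultraStr U Mi) m = ultraMk U Mi fun n => numM (Mi n) m := by
  induction m with
  | zero => rfl
  | succ m ih => exact congrArg ((ultraStr U Mi).add · (ultraStr U Mi).one) ih

theorem joinM_ultraStr (A B : ∀ n, Set (Mi n).carrier) :
    joinM (ultraStr U Mi) (ultraSet U Mi A) (ultraSet U Mi B) =
      ultraSet U Mi fun n => joinM (Mi n) (A n) (B n) := by
  ext c
  obtain ⟨x, rfl⟩ := ultraMk_surjective c
  rw [ultraMk_mem_ultraSet]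
  simpa [sat_joinFormula] using sat_ultraStr_iff joinFormula_isArithmetic (D := Set.univ)
    (D' := fun _ => Set.univ) (v := fun _ => x) (V := fun i => if i = 0 then A else B)
    (V' := fun i => if i = 0 then ultraSet U Mi A else ultraSet U Mi B) (fun _ => rfl)
    fun _ => by split_ifs <;> rfl

theorem setOf_add_one_mem_ultraSet (Z : ∀ n, Set (Mi n).carrier) :
    {a | (ultraStr U Mi).add a (ultraStr U Mi).one ∈ ultraSet U Mi Z} =
      ultraSet U Mi fun n => {b | (Mi n).add b (Mi n).one ∈ Z n} := by
  ext c
  obtain ⟨x, rfl⟩ := ultraMk_surjective c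
  rfl

theorem joinList_histL_ultraStr (f : ∀ n, ℕ → Set (Mi n).carrier) (m : ℕ) :
    joinList (ultraStr U Mi) (histL _ (fun k => ultraSet U Mi fun n => f n k) m) =
      ultraSet U Mi fun n => joinList (Mi n) (histL (Mi n) (f n) m) := by
  induction m with
  | zero => rfl
  | succ m ih => simp only [joinList_histL_succ, ih, joinM_ultraStr]

theorem PlayStep.ultraStr {θ Λ : Formula} {Q : Pi12Problem} (hθ : θ.IsArithmetic)
    (hΛ : Λ.IsArithmetic) (hQθ : Q.theta.IsArithmetic) (hQψ : Q.psi.IsArithmetic)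
    {f : ∀ n, ℕ → Set (Mi n).carrier} {m : ℕ} {e : ∀ n, (Mi n).carrier}
    {Z : ∀ n, Set (Mi n).carrier} (h : ∀ᶠ n in U, PlayStep θ Λ Q (Mi n) (f n) m (e n) (Z n)) :
    PlayStep θ Λ Q (ultraStr U Mi) (fun k => ultraSet U Mi fun n => f n k) m (ultraMk U Mi e)
      (ultraSet U Mi Z) where
  lambda := by
    rw [joinList_histL_ultraStr]
    refine (sat_ultraStr_iff hΛ (v := fun k n => if k = 0 then numM (Mi n) m
      else if k = 1 then e n else (Mi n).zero) (fun k => ?_) fun _ => rfl).2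
      (h.mono fun _ h => h.lambda)
    split_ifs
    exacts [numM_ultraStr m, rfl, rfl]
  isPhi := joinList_histL_ultraStr f m ▸ isPhi_ultraStr hθ (h.mono fun _ h => h.isPhi)
  not_win hzero := by
    obtain ⟨n, hzero, hn⟩ := (Filter.Eventually.and hzero h).exists
    exact hn.not_win hzero
  q_inst := by
    rw [setOf_add_one_mem_ultraSet]
    exact (inst_ultraStr hQθ).2 (h.mono fun _ h => h.q_inst)
  q_sol := by
    rw [setOf_add_one_mem_ultraSet]
    exact (sol_ultraStr hQψ).2 (h.mono fun _ h => h.q_sol)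

end UltraTransfer

theorem exists_endlessPlay {Γ : Set Formula} {θ Λ : Formula} {P Q : Pi12Problem}
    (hθ : θ.IsArithmetic) (hΛ : Λ.IsArithmetic) (hP : P.theta.IsArithmetic)
    (hQθ : Q.theta.IsArithmetic) (hQψ : Q.psi.IsArithmetic)
    (hlong : ∀ n, ∃ (M : L1Struc) (f : ℕ → Set M.carrier) (g : ℕ → Prop × Set M.carrier),
      AccordsLambda θ Λ P Q M (CondG Γ M) f g ∧ Alive P Q M (CondG Γ M) f g n) :
    ∃ (M : L1Struc) (S : Set (Set M.carrier)) (π : EndlessPlay θ Λ P Q M),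
      Models2 M S Γ ∧ ∀ m, π.move m ∈ S := by
  choose Mi f g hacc halive using hlong
  choose T hBT hT using fun n => (halive n).cond
  have hTne : ∀ n, (T n).Nonempty := fun n => ⟨_, hBT n univ_mem_Mcl⟩
  set U := Filter.hyperfilter ℕ
  have hlate : ∀ m, ∀ᶠ n in U, m ≤ n := fun m =>
    Filter.Eventually.filter_mono Nat.hyperfilter_le_atTop (Filter.eventually_ge_atTop m)
  have hstep : ∀ m, ∀ᶠ n in U, ∃ p : (Mi n).carrier × Set (Mi n).carrier,
      PlayStep θ Λ Q (Mi n) (f n) m p.1 p.2 := fun m =>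
    (hlate (m + 1)).mono fun n hn => ((halive n).of_le hn).playStep (hacc n)
  choose p hp using fun m => Filter.skolem.1 (hstep m)
  refine ⟨ultraStr U Mi, ultraSets U Mi T,
    ⟨fun m => ultraSet U Mi fun n => f n m, fun m => ultraMk U Mi fun n => (p m n).1,
      fun m => ultraSet U Mi fun n => (p m n).2,
      (inst_ultraStr hP).2 (.of_forall fun n => ((halive n).of_le n.zero_le).1),
      fun m => PlayStep.ultraStr hθ hΛ hQθ hQψ (hp m)⟩,
    models2_ultraStr hTne hT, fun m => ultraSet_mem_ultraSets hTne <|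
      (hlate m).mono fun n hn => hBT n (mem_Mcl_of_mem (mem_histL.2 ⟨m, hn, rfl⟩))⟩

theorem statement7_general (Γ : Set Formula) (hExt : Delta01CA ⊆ Γ)
    (θ : Formula) (hθ : UnivSigma01 Γ θ)
    (P Q : Pi12Problem) (hP : P.WellFormed) (hQ : Q.WellFormed)
    (Λ : Formula) (hΛ : Λ.IsArithmetic)
    (hwin : ∀ (M : L1Struc) (S : Set (Set M.carrier)), Countable M.carrier →
      Models2 M S Γ → D01Closed M S → ∀ f g,
        AccordsLambda θ Λ P Q M (CondS M S) f g → P2WinsRun P Q M (CondS M S) f g) :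
    ∃ n : ℕ, ∀ M : L1Struc, Countable M.carrier → ∀ f g,
      AccordsLambda θ Λ P Q M (CondG Γ M) f g →
        P2WinsRunWithin P Q M (CondG Γ M) f g n := by
  have hθa : θ.IsArithmetic := hθ.1.1.isArithmetic
  by_contra! hlong
  obtain ⟨M, S, π, hMS, hmove⟩ := exists_endlessPlay hθa hΛ hP.1 hQ.1 hQ.2.1 fun n => by
    obtain ⟨M, hM, f, g, hacc, hnot⟩ := hlong n
    exact ⟨M, f, g, hacc, not_not.1 fun hdead =>
      hnot ⟨fun _ halive => hacc.legal hExt hwin hM halive, hdead⟩⟩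
  obtain ⟨M', S', π', hM', hMS', hmove'⟩ :=
    π.exists_countable hθa hΛ hP.1 hQ.1 hQ.2.1 hMS hmove
  exact π'.false_of_countable hExt hwin hM' hMS' hmove'

/-- Let `Γ` be a consistent extension of Δ⁰₁-comprehension that proves the existence of a
universal Σ⁰₁ formula `θ`. Let `P`, `Q` be Π¹₂-problems and `Λ(X,n,e)` an arithmetic
formula such that Player 2 wins any run of `Ĝ^Γ(Q → P)` that it plays according to `Λ`.
Then there is an `n` such that Player 2 wins any run of `G^Γ(Q → P)` that it plays
according to `Λ` in at most `n` many moves. -/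
theorem statement7 (Γ : Set Formula) (hCons : SemConsistent Γ) (hExt : Delta01CA ⊆ Γ)
    (θ : Formula) (hθ : UnivSigma01 Γ θ)
    (P Q : Pi12Problem) (hP : P.WellFormed) (hQ : Q.WellFormed)
    (Λ : Formula) (hΛ : Λ.IsArithmetic) (hΛN : Λ.numFV ⊆ {0, 1}) (hΛS : Λ.setFV ⊆ {0})
    (hwin : ∀ (M : L1Struc) (S : Set (Set M.carrier)), Countable M.carrier →
      Models2 M S Γ → D01Closed M S → ∀ f g,
        AccordsLambda θ Λ P Q M (CondS M S) f g → P2WinsRun P Q M (CondS M S) f g) :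
    ∃ n : ℕ, ∀ M : L1Struc, Countable M.carrier → ∀ f g,
      AccordsLambda θ Λ P Q M (CondG Γ M) f g →
        P2WinsRunWithin P Q M (CondG Γ M) f g n :=
  statement7_general Γ hExt θ hθ P Q hP hQ Λ hΛ hwin

end SOA
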